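/- arXiv:1806.10424 — 2 statements merged into one kernel-verified Lean document; each statement's English description precedes it below -/
import Mathlib

section
/- Let n and α be positive integers with α < n and n ≥ 2α. Let G be a connected graph of order n and independence number α whose vertex set is the disjoint union of the vertex sets of α cliques C_0,…,C_{α−1}, such that every edge of G that does not lie inside one of these cliques is incident with a fixed vertex x_0 ∈ C_0, and x_0 has exactly one neighbor in each of the cliques C_1,…,C_{α−1}. Then ♯α(G) = f(n,α) if and only if G is isomorphic to F(n,α). -/
open Finset

/-- A finset of vertices is independent in `G`: pairwise non-adjacent. -/
def IsIndepFinset {V : Type*} (G : SimpleGraph V) (s : Finset V) : Prop :=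
  ∀ ⦃u⦄, u ∈ s → ∀ ⦃v⦄, v ∈ s → u ≠ v → ¬ G.Adj u v

/-- The independence number of a finite graph. -/
noncomputable def indepNumber {V : Type*} [Fintype V] (G : SimpleGraph V) : ℕ :=
  sSup {k | ∃ s : Finset V, IsIndepFinset G s ∧ s.card = k}

/-- The number `♯α(G)` of maximum independent sets of `G`. -/
noncomputable def numMaxIndep {V : Type*} [Fintype V] (G : SimpleGraph V) : ℕ :=
  Set.ncard {s : Finset V | IsIndepFinset G s ∧ s.card = indepNumber G}

/-- The number `♯α(G,u)` of maximum independent sets of `G` containing `u`. -/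
noncomputable def numMaxIndepOn {V : Type*} [Fintype V] (G : SimpleGraph V) (u : V) : ℕ :=
  Set.ncard {s : Finset V | IsIndepFinset G s ∧ s.card = indepNumber G ∧ u ∈ s}

/-- `g(n,α) = ⌊n/α⌋^(α − n mod α) ⌈n/α⌉^(n mod α)`. -/
def gFun (n a : ℕ) : ℕ := (n / a) ^ (a - n % a) * ((n + a - 1) / a) ^ (n % a)

/-- `t(n,α) = ∏_{i=1}^{α−1} (|C_i| − 1)`, where `|C_i| = ⌊n/α⌋ + 1` for `i < n mod α`
and `|C_i| = ⌊n/α⌋` otherwise. -/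
def tFun (n a : ℕ) : ℕ := ∏ i ∈ Finset.Ico 1 a, (n / a + (if i < n % a then 1 else 0) - 1)

/-- `f(n,α) = g(n−1,α) + t(n,α)`. -/
def fFun (n a : ℕ) : ℕ := gFun (n - 1) a + tFun n a

/-- `G(n,α)`: complement of the Turán graph, i.e. the disjoint union of `α` cliques
(the residue classes mod `α`), each of order `⌈n/α⌉` or `⌊n/α⌋`. -/
def Ggraph (n a : ℕ) : SimpleGraph (Fin n) where
  Adj v w := v ≠ w ∧ v.val % a = w.val % a
  symm := by constructor; intro v w h; exact ⟨h.1.symm, h.2.symm⟩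
  loopless := by constructor; intro v h; exact h.1 rfl

/-- `F(n,α)`: `G(n,α)` plus the edges `x₀x₁, …, x₀x_{α−1}`, where `x_i` is the vertex `i`
of the clique `C_i` (the residue class of `i` mod `α`); `x₀ = 0` is the special cutvertex,
lying in the clique `C₀` of order `⌈n/α⌉`. -/
def Fgraph (n a : ℕ) : SimpleGraph (Fin n) where
  Adj v w := v ≠ w ∧
    (v.val % a = w.val % a ∨ (v.val = 0 ∧ w.val < a) ∨ (w.val = 0 ∧ v.val < a))
  symm := by constructor; intro v w h; beta_reduce at h ⊢; exact ⟨h.1.symm, by tauto⟩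
  loopless := by constructor; intro v h; exact h.1 rfl


/-- `H` function: the count of max independent sets in terms of clique sizes. -/
def Hc {a : ℕ} (i0 : Fin a) (c : Fin a → ℕ) : ℕ :=
  (c i0 - 1) * ∏ i ∈ univ.erase i0, c i + ∏ i ∈ univ.erase i0, (c i - 1)

def GoodC (n a : ℕ) {a' : ℕ} (i0 : Fin a') (c : Fin a' → ℕ) : Prop :=
  (c i0 = (n + a - 1) / a ∧ ∀ i, i ≠ i0 → n / a ≤ c i ∧ c i ≤ n / a + 1) ∨
  (a = 2 ∧ n % a = 1 ∧ c i0 = n / a)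

lemma dm_div {a : ℕ} (k s : ℕ) (ha : 0 < a) (hs : s < a) : (s + a * k) / a = k := by
  rw [Nat.add_mul_div_left _ _ ha, Nat.div_eq_of_lt hs, Nat.zero_add]

lemma dm_mod {a : ℕ} (k s : ℕ) (hs : s < a) : (s + a * k) % a = s := by
  rw [Nat.add_mul_mod_self_left, Nat.mod_eq_of_lt hs]

lemma gFun_pred {n a : ℕ} (ha : 0 < a) (h2a : 2 * a ≤ n) :
    gFun (n - 1) a = if n % a = 0 then (n / a - 1) * (n / a) ^ (a - 1)
      else (n / a) ^ (a - n % a + 1) * (n / a + 1) ^ (n % a - 1) := by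
  have hn : a * (n / a) + n % a = n := Nat.div_add_mod n a
  have hra : n % a < a := Nat.mod_lt _ ha
  have hq2 : 2 ≤ n / a := (Nat.le_div_iff_mul_le ha).2 (by omega)
  have hqa : a * (n / a - 1) = a * (n / a) - a := by rw [Nat.mul_sub, mul_one]
  rcases Nat.eq_or_lt_of_le ha with ha1 | ha2
  · -- a = 1
    have : a = 1 := ha1.symm
    subst this
    simp only [gFun, Nat.div_one, Nat.mod_one, if_pos]
    simp [Nat.sub_zero, pow_one]
  by_cases hr0 : n % a = 0
  · rw [if_pos hr0]
    have e1 : (n - 1) / a = n / a - 1 := by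
      have h : n - 1 = (a - 1) + a * (n / a - 1) := by omega
      rw [h, dm_div _ _ ha (by omega)]
    have e2 : (n - 1) % a = a - 1 := by
      have h : n - 1 = (a - 1) + a * (n / a - 1) := by omega
      rw [h, dm_mod _ _ (by omega)]
    have e3 : (n - 1 + a - 1) / a = n / a := by
      have h : n - 1 + a - 1 = (a - 2) + a * (n / a) := by omega
      rw [h, dm_div _ _ ha (by omega)]
    have e4 : a - (a - 1) = 1 := by omega
    rw [gFun, e1, e2, e3, e4, pow_one]
  · rw [if_neg hr0]
    have e1 : (n - 1) / a = n / a := by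
      have h : n - 1 = (n % a - 1) + a * (n / a) := by omega
      rw [h, dm_div _ _ ha (by omega)]
    have e2 : (n - 1) % a = n % a - 1 := by
      have h : n - 1 = (n % a - 1) + a * (n / a) := by omega
      rw [h, dm_mod _ _ (by omega)]
    have e4 : a - (n % a - 1) = a - n % a + 1 := by omega
    rw [gFun, e1, e2, e4]
    by_cases hr1 : n % a = 1
    · rw [hr1]
      simp
    · have e3 : (n - 1 + a - 1) / a = n / a + 1 := by
        have hqb : a * (n / a + 1) = a * (n / a) + a := by ring
        have h : n - 1 + a - 1 = (n % a - 2) + a * (n / a + 1) := by omega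
        rw [h, dm_div _ _ ha (by omega)]
      rw [e3]

lemma tFun_eq {n a : ℕ} (ha : 0 < a) :
    tFun n a = if n % a = 0 then (n / a - 1) ^ (a - 1)
      else (n / a) ^ (n % a - 1) * (n / a - 1) ^ (a - n % a) := by
  have hra : n % a < a := Nat.mod_lt _ ha
  by_cases hr0 : n % a = 0
  · rw [if_pos hr0]
    unfold tFun
    rw [Finset.prod_congr rfl (fun i _ => by rw [if_neg (by omega)])]
    rw [Finset.prod_congr rfl (fun i _ => by rw [Nat.add_zero])]
    rw [Finset.prod_const, Nat.card_Ico]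
  · rw [if_neg hr0]
    unfold tFun
    rw [← Finset.prod_Ico_consecutive _ (by omega : 1 ≤ n % a) (by omega : n % a ≤ a)]
    have p1 : ∏ i ∈ Finset.Ico 1 (n % a), (n / a + (if i < n % a then 1 else 0) - 1)
        = (n / a) ^ (n % a - 1) := by
      rw [Finset.prod_congr rfl (fun i hi => by
        rw [if_pos (Finset.mem_Ico.1 hi).2, Nat.add_sub_cancel])]
      rw [Finset.prod_const, Nat.card_Ico]
    have p2 : ∏ i ∈ Finset.Ico (n % a) a, (n / a + (if i < n % a then 1 else 0) - 1)
        = (n / a - 1) ^ (a - n % a) := by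
      rw [Finset.prod_congr rfl (fun i hi => by
        rw [if_neg (by have := (Finset.mem_Ico.1 hi).1; omega), Nat.add_zero])]
      rw [Finset.prod_const, Nat.card_Ico]
    rw [p1, p2]

lemma fFun_closed {n a : ℕ} (ha : 0 < a) (h2a : 2 * a ≤ n) :
    fFun n a = if n % a = 0 then (n / a - 1) * (n / a) ^ (a - 1) + (n / a - 1) ^ (a - 1)
      else (n / a) ^ (a - n % a + 1) * (n / a + 1) ^ (n % a - 1)
        + (n / a) ^ (n % a - 1) * (n / a - 1) ^ (a - n % a) := by
  unfold fFun
  rw [gFun_pred ha h2a, tFun_eq ha]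
  by_cases h : n % a = 0 <;> simp [h]


lemma ceil_eq {n a q r : ℕ} (ha : 0 < a) (hn : a * q + r = n) (hra : r < a) (hq1 : 1 ≤ q) :
    (n + a - 1) / a = if r = 0 then q else q + 1 := by
  by_cases h0 : r = 0
  · rw [if_pos h0]
    have h : n + a - 1 = (a - 1) + a * q := by omega
    rw [h, dm_div _ _ ha (by omega)]
  · rw [if_neg h0]
    have hqb : a * (q + 1) = a * q + a := by ring
    have h : n + a - 1 = (r - 1) + a * (q + 1) := by omega
    rw [h, dm_div _ _ ha (by omega)]

lemma Hc_of_good {n a : ℕ} {i0 : Fin a} {c : Fin a → ℕ} (ha : 0 < a) (h2a : 2 * a ≤ n)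
    (hsum : ∑ i, c i = n) (hg : GoodC n a i0 c) :
    Hc i0 c = fFun n a := by
  classical
  obtain ⟨q, hq⟩ : ∃ q, n / a = q := ⟨_, rfl⟩
  obtain ⟨r, hr⟩ : ∃ r, n % a = r := ⟨_, rfl⟩
  have hn : a * q + r = n := by rw [← hq, ← hr]; exact Nat.div_add_mod n a
  have hra : r < a := hr ▸ Nat.mod_lt _ ha
  have hq2 : 2 ≤ q := hq ▸ (Nat.le_div_iff_mul_le ha).2 h2a
  have hceil := ceil_eq ha hn hra (by omega)
  rw [fFun_closed ha h2a, hq, hr]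
  unfold GoodC at hg
  rw [hq, hr, hceil] at hg
  have hsumE : c i0 + ∑ i ∈ univ.erase i0, c i = n := by
    rw [Finset.add_sum_erase _ _ (mem_univ i0)]; exact hsum
  have hEcard : (univ.erase i0).card = a - 1 := by
    rw [Finset.card_erase_of_mem (mem_univ i0), Finset.card_univ, Fintype.card_fin]
  rcases hg with ⟨hc0, hbd⟩ | ⟨ha2, hr1, hc0⟩
  · set E := univ.erase i0 with hEdef
    set S := E.filter (fun i => c i = q + 1) with hSdef
    set T := E.filter (fun i => ¬ c i = q + 1) with hTdef
    have hkey : ∀ i ∈ T, c i = q := by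
      intro i hi
      rw [hTdef, mem_filter] at hi
      have hne : i ≠ i0 := by
        have := hi.1; rw [hEdef, Finset.mem_erase] at this; exact this.1
      have := hbd i hne
      omega
    have hST : S.card + T.card = E.card := Finset.card_filter_add_card_filter_not _
    have hsplit : ∑ i ∈ E, c i = S.card * (q + 1) + T.card * q := by
      rw [← Finset.sum_filter_add_sum_filter_not E (fun i => c i = q + 1), ← hSdef, ← hTdef]
      rw [Finset.sum_congr rfl (fun i hi => (mem_filter.1 hi).2), Finset.sum_const, smul_eq_mul,
        Finset.sum_congr rfl hkey, Finset.sum_const, smul_eq_mul]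
    have hprod1 : ∏ i ∈ E, c i = (q + 1) ^ S.card * q ^ T.card := by
      rw [← Finset.prod_filter_mul_prod_filter_not E (fun i => c i = q + 1), ← hSdef, ← hTdef]
      rw [Finset.prod_congr rfl (fun i hi => (mem_filter.1 hi).2), Finset.prod_const]
      rw [Finset.prod_congr rfl hkey, Finset.prod_const]
    have hprod2 : ∏ i ∈ E, (c i - 1) = q ^ S.card * (q - 1) ^ T.card := by
      rw [← Finset.prod_filter_mul_prod_filter_not E (fun i => c i = q + 1), ← hSdef, ← hTdef]
      rw [Finset.prod_congr rfl (fun i hi => by rw [(mem_filter.1 hi).2, Nat.add_sub_cancel]),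
        Finset.prod_const]
      rw [Finset.prod_congr rfl (fun i hi => by rw [hkey i hi]), Finset.prod_const]
    have e1 : c i0 + (S.card * (q + 1) + T.card * q) = n := by
      rw [← hsplit]; exact hsumE
    have e2 : S.card * (q + 1) + T.card * q = S.card + (S.card + T.card) * q := by ring
    rw [e2, hST, hEcard] at e1
    have hmulA : (a - 1) * q = a * q - q := by
      rw [Nat.sub_mul, one_mul]
    rw [hmulA] at e1
    have haq : q ≤ a * q := Nat.le_mul_of_pos_left q ha
    rw [Hc, ← hEdef, hprod1, hprod2]
    by_cases hr0 : r = 0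
    · simp only [if_pos hr0] at hc0 e1 ⊢
      rw [hc0]
      have hs0 : S.card = 0 := by omega
      have ht : T.card = a - 1 := by omega
      rw [hs0, ht, pow_zero, one_mul, pow_zero, one_mul]
    · simp only [if_neg hr0] at hc0 e1 ⊢
      rw [hc0]
      have hs : S.card = r - 1 := by omega
      have ht : T.card = a - r := by omega
      rw [hs, ht, Nat.add_sub_cancel]
      have hpow : a - r + 1 = (a - r) + 1 := rfl
      rw [hpow, pow_succ]
      ring
  · subst ha2
    rw [if_neg (by omega)] at hceil ⊢
    rw [hr1]
    obtain ⟨j, hj⟩ := Finset.card_eq_one.1 (show (univ.erase i0).card = 1 by omega)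
    have hcj : c i0 + c j = n := by
      rw [← hsumE, hj, Finset.sum_singleton]
    obtain ⟨x, hx⟩ : ∃ x, q = x + 2 := ⟨q - 2, by omega⟩
    have hcj' : c j = q + 1 := by omega
    rw [Hc, hj, Finset.prod_singleton, Finset.prod_singleton, hc0, hcj', hx]
    norm_num
    ring


def Phi (n : ℕ) {a : ℕ} (i0 : Fin a) (c : Fin a → ℕ) : ℕ := (∑ i, c i ^ 2) + (n - c i0)

section helpers
variable {a : ℕ}

lemma prod_two_out {s : Finset (Fin a)} {g c : Fin a → ℕ} {j : Fin a} (hj : j ∈ s)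
    (hg : ∀ i ∈ s, i ≠ j → g i = c i) :
    ∏ i ∈ s, g i = g j * ∏ i ∈ s.erase j, c i := by
  rw [← Finset.mul_prod_erase s g hj]
  congr 1
  exact Finset.prod_congr rfl (fun i hi =>
    hg i (Finset.mem_of_mem_erase hi) (Finset.ne_of_mem_erase hi))

lemma sum_two_mem {s : Finset (Fin a)} {g c : Fin a → ℕ} {p j : Fin a} (hp : p ∈ s) (hj : j ∈ s)
    (hpj : p ≠ j) (hg : ∀ i ∈ s, i ≠ p → i ≠ j → g i = c i) :
    ∑ i ∈ s, g i = g p + (g j + ∑ i ∈ (s.erase p).erase j, c i) := by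
  rw [← Finset.add_sum_erase s g hp,
    ← Finset.add_sum_erase (s.erase p) g (Finset.mem_erase_of_ne_of_mem hpj.symm hj)]
  congr 2
  exact Finset.sum_congr rfl (fun i hi => by
    have h1 := Finset.ne_of_mem_erase hi
    have h2 := Finset.mem_of_mem_erase hi
    exact hg i (Finset.mem_of_mem_erase h2) (Finset.ne_of_mem_erase h2) h1)

lemma prod_pred_succ_le {s : Finset (Fin a)} (hs : s.Nonempty) (f : Fin a → ℕ)
    (hf : ∀ i ∈ s, 1 ≤ f i) :
    ∏ i ∈ s, (f i - 1) + 1 ≤ ∏ i ∈ s, f i := by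
  induction hs using Finset.Nonempty.cons_induction with
  | singleton i => simp only [Finset.prod_singleton]; have := hf i (Finset.mem_singleton_self i); omega
  | cons i s his hs ih =>
    rw [Finset.prod_cons, Finset.prod_cons]
    have h1 : 1 ≤ f i := hf i (Finset.mem_cons_self i s)
    have hP : 1 ≤ ∏ j ∈ s, f j := Finset.one_le_prod' (fun j hj => hf j (Finset.mem_cons_of_mem hj))
    have hih := ih (fun j hj => hf j (Finset.mem_cons_of_mem hj))
    obtain ⟨x, hx⟩ : ∃ x, f i = x + 1 := ⟨f i - 1, by omega⟩
    rw [hx]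
    simp only [Nat.add_sub_cancel]
    nlinarith [Nat.mul_le_mul_left x hih]

end helpers

lemma moveB {n a : ℕ} {i0 : Fin a} {c : Fin a → ℕ}
    (h1 : ∀ i, 1 ≤ c i) (hsum : ∑ i, c i = n) {j : Fin a} (hj : j ≠ i0)
    (hup : c i0 + 1 ≤ c j) (hside : 3 ≤ a ∨ c i0 + 2 ≤ c j) :
    ∃ c' : Fin a → ℕ, (∀ i, 1 ≤ c' i) ∧ (∑ i, c' i = n) ∧
      Phi n i0 c' < Phi n i0 c ∧ Hc i0 c < Hc i0 c' := by
  classical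
  set c' := Function.update (Function.update c j (c j - 1)) i0 (c i0 + 1) with hc'
  have hjE : j ∈ Finset.univ.erase i0 := Finset.mem_erase.2 ⟨hj, Finset.mem_univ j⟩
  have hd : c' i0 = c i0 + 1 := by rw [hc', Function.update_self]
  have hdj : c' j = c j - 1 := by
    rw [hc', Function.update_of_ne hj, Function.update_self]
  have hother : ∀ k, k ≠ i0 → k ≠ j → c' k = c k := by
    intro k hk1 hk2; rw [hc', Function.update_of_ne hk1, Function.update_of_ne hk2]
  obtain ⟨x, hx⟩ : ∃ x, c i0 = x + 1 := ⟨c i0 - 1, by have := h1 i0; omega⟩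
  obtain ⟨t, ht⟩ : ∃ t, c j = x + 2 + t := ⟨c j - c i0 - 1, by omega⟩
  have hcjn : c i0 + c j ≤ n := by
    rw [← hsum, ← Finset.add_sum_erase _ _ (Finset.mem_univ i0)]
    exact Nat.add_le_add_left (Finset.single_le_sum (fun i _ => Nat.zero_le _) hjE) _
  obtain ⟨m, hm⟩ : ∃ m, n = (x + 1) + (x + 2 + t) + m := ⟨n - (c i0 + c j), by omega⟩
  refine ⟨c', ?_, ?_, ?_, ?_⟩
  · intro i
    rcases eq_or_ne i i0 with rfl | hi1
    · rw [hd]; omega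
    rcases eq_or_ne i j with rfl | hi2
    · rw [hdj]; omega
    · rw [hother i hi1 hi2]; exact h1 i
  · rw [← hsum,
      sum_two_mem (g := c') (c := c) (Finset.mem_univ i0) (Finset.mem_univ j) (Ne.symm hj)
        (fun i _ hi1 hi2 => hother i hi1 hi2),
      sum_two_mem (g := c) (c := c) (Finset.mem_univ i0) (Finset.mem_univ j) (Ne.symm hj)
        (fun i _ _ _ => rfl), hd, hdj]
    omega
  · unfold Phi
    rw [sum_two_mem (g := fun i => c' i ^ 2) (c := fun i => c i ^ 2) (Finset.mem_univ i0)
        (Finset.mem_univ j) (Ne.symm hj) (fun i _ hi1 hi2 => by show c' i ^ 2 = c i ^ 2; rw [hother i hi1 hi2]),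
      sum_two_mem (g := fun i => c i ^ 2) (c := fun i => c i ^ 2) (Finset.mem_univ i0)
        (Finset.mem_univ j) (Ne.symm hj) (fun i _ _ _ => rfl), hd, hdj, hx, ht]
    have e1 : x + 2 + t - 1 = x + 1 + t := by omega
    have e2 : x + 1 + 1 = x + 2 := by omega
    rw [e1, e2, hm]
    have e3 : x + 1 + (x + 2 + t) + m - (x + 2) = x + 1 + t + m := by omega
    have e4 : x + 1 + (x + 2 + t) + m - (x + 1) = x + 2 + t + m := by omega
    rw [e3, e4]
    nlinarith
  · unfold Hc
    rw [prod_two_out (g := c') (c := c) hjE (fun i hi hij =>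
          hother i (Finset.mem_erase.1 hi).1 hij),
      prod_two_out (g := fun i => c' i - 1) (c := fun i => c i - 1) hjE (fun i hi hij => by
          show c' i - 1 = c i - 1; rw [hother i (Finset.mem_erase.1 hi).1 hij]),
      prod_two_out (g := c) (c := c) hjE (fun _ _ _ => rfl),
      prod_two_out (g := fun i => c i - 1) (c := fun i => c i - 1) hjE (fun _ _ _ => rfl),
      hd, hdj]
    set P := ∏ i ∈ (Finset.univ.erase i0).erase j, c i with hP'
    set Q := ∏ i ∈ (Finset.univ.erase i0).erase j, (c i - 1) with hQ'
    have hP : 1 ≤ P := Finset.one_le_prod' (fun i _ => h1 i)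
    have hQP : Q ≤ P := Finset.prod_le_prod' (fun i _ => Nat.sub_le _ _)
    rw [hx, ht]
    have e1 : x + 2 + t - 1 = x + 1 + t := by omega
    have e2 : x + 1 + 1 - 1 = x + 1 := by omega
    have e3 : x + 1 - 1 = x := by omega
    have e4 : x + 1 + t - 1 = x + t := by omega
    rw [e1, e2, e3, e4]
    have key : Q + 1 ≤ (t + 1) * P := by
      rcases hside with h3 | h3
      · have hne : ((Finset.univ.erase i0).erase j).Nonempty := by
          rw [← Finset.card_pos, Finset.card_erase_of_mem hjE,
            Finset.card_erase_of_mem (Finset.mem_univ i0), Finset.card_univ, Fintype.card_fin]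
          omega
        have hQP1 : Q + 1 ≤ P := prod_pred_succ_le hne c (fun i _ => h1 i)
        exact le_trans hQP1 (Nat.le_mul_of_pos_left P (by omega))
      · have h2P : 2 * P ≤ (t + 1) * P := Nat.mul_le_mul_right P (by omega)
        omega
    have expand : (x+1)*((x+1+t)*P) + (x+t)*Q = x*((x+2+t)*P) + ((t+1)*P + (x+t)*Q) := by ring
    have expand2 : (x+1+t)*Q = (x+t)*Q + Q := by ring
    omega


lemma prod_two_mem {a : ℕ} {s : Finset (Fin a)} {g c : Fin a → ℕ} {p j : Fin a} (hp : p ∈ s)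
    (hj : j ∈ s) (hpj : p ≠ j) (hg : ∀ i ∈ s, i ≠ p → i ≠ j → g i = c i) :
    ∏ i ∈ s, g i = g p * (g j * ∏ i ∈ (s.erase p).erase j, c i) := by
  rw [← Finset.mul_prod_erase s g hp,
    ← Finset.mul_prod_erase (s.erase p) g (Finset.mem_erase_of_ne_of_mem hpj.symm hj)]
  congr 2
  exact Finset.prod_congr rfl (fun i hi => by
    have h1 := Finset.ne_of_mem_erase hi
    have h2 := Finset.mem_of_mem_erase hi
    exact hg i (Finset.mem_of_mem_erase h2) (Finset.ne_of_mem_erase h2) h1)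

lemma moveA {n a : ℕ} {i0 : Fin a} {c : Fin a → ℕ}
    (h1 : ∀ i, 1 ≤ c i) (hsum : ∑ i, c i = n) {j : Fin a} (hj : j ≠ i0)
    (hup : c j + 2 ≤ c i0)
    (hside : c j + 3 ≤ c i0 ∨ ∀ k, k ≠ i0 → k ≠ j → 2 ≤ c k) :
    ∃ c' : Fin a → ℕ, (∀ i, 1 ≤ c' i) ∧ (∑ i, c' i = n) ∧
      Phi n i0 c' < Phi n i0 c ∧ Hc i0 c < Hc i0 c' := by
  classical
  set c' := Function.update (Function.update c j (c j + 1)) i0 (c i0 - 1) with hc'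
  have hjE : j ∈ Finset.univ.erase i0 := Finset.mem_erase.2 ⟨hj, Finset.mem_univ j⟩
  have hd : c' i0 = c i0 - 1 := by rw [hc', Function.update_self]
  have hdj : c' j = c j + 1 := by
    rw [hc', Function.update_of_ne hj, Function.update_self]
  have hother : ∀ k, k ≠ i0 → k ≠ j → c' k = c k := by
    intro k hk1 hk2; rw [hc', Function.update_of_ne hk1, Function.update_of_ne hk2]
  obtain ⟨y, hy⟩ : ∃ y, c j = y + 1 := ⟨c j - 1, by have := h1 j; omega⟩
  obtain ⟨t, ht⟩ : ∃ t, c i0 = y + 3 + t := ⟨c i0 - c j - 2, by omega⟩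
  have hcjn : c i0 + c j ≤ n := by
    rw [← hsum, ← Finset.add_sum_erase _ _ (Finset.mem_univ i0)]
    exact Nat.add_le_add_left (Finset.single_le_sum (fun i _ => Nat.zero_le _) hjE) _
  obtain ⟨m, hm⟩ : ∃ m, n = (y + 3 + t) + (y + 1) + m := ⟨n - (c i0 + c j), by omega⟩
  refine ⟨c', ?_, ?_, ?_, ?_⟩
  · intro i
    rcases eq_or_ne i i0 with rfl | hi1
    · rw [hd]; omega
    rcases eq_or_ne i j with rfl | hi2
    · rw [hdj]; omega
    · rw [hother i hi1 hi2]; exact h1 i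
  · rw [← hsum,
      sum_two_mem (g := c') (c := c) (Finset.mem_univ i0) (Finset.mem_univ j) (Ne.symm hj)
        (fun i _ hi1 hi2 => hother i hi1 hi2),
      sum_two_mem (g := c) (c := c) (Finset.mem_univ i0) (Finset.mem_univ j) (Ne.symm hj)
        (fun i _ _ _ => rfl), hd, hdj]
    omega
  · unfold Phi
    rw [sum_two_mem (g := fun i => c' i ^ 2) (c := fun i => c i ^ 2) (Finset.mem_univ i0)
        (Finset.mem_univ j) (Ne.symm hj)
        (fun i _ hi1 hi2 => by show c' i ^ 2 = c i ^ 2; rw [hother i hi1 hi2]),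
      sum_two_mem (g := fun i => c i ^ 2) (c := fun i => c i ^ 2) (Finset.mem_univ i0)
        (Finset.mem_univ j) (Ne.symm hj) (fun i _ _ _ => rfl), hd, hdj, hy, ht, hm]
    have e1 : y + 3 + t - 1 = y + 2 + t := by omega
    have e2 : y + 3 + t + (y + 1) + m - (y + 2 + t) = y + 2 + m := by omega
    have e3 : y + 3 + t + (y + 1) + m - (y + 3 + t) = y + 1 + m := by omega
    rw [e1, e2, e3]
    nlinarith
  · unfold Hc
    rw [prod_two_out (g := c') (c := c) hjE (fun i hi hij =>
          hother i (Finset.mem_erase.1 hi).1 hij),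
      prod_two_out (g := fun i => c' i - 1) (c := fun i => c i - 1) hjE (fun i hi hij => by
          show c' i - 1 = c i - 1; rw [hother i (Finset.mem_erase.1 hi).1 hij]),
      prod_two_out (g := c) (c := c) hjE (fun _ _ _ => rfl),
      prod_two_out (g := fun i => c i - 1) (c := fun i => c i - 1) hjE (fun _ _ _ => rfl),
      hd, hdj]
    set P := ∏ i ∈ (Finset.univ.erase i0).erase j, c i with hP'
    set Q := ∏ i ∈ (Finset.univ.erase i0).erase j, (c i - 1) with hQ'
    have hP : 1 ≤ P := Finset.one_le_prod' (fun i _ => h1 i)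
    rw [hy, ht]
    have e1 : y + 3 + t - 1 = y + 2 + t := by omega
    have e2 : y + 2 + t - 1 = y + 1 + t := by omega
    have e3 : y + 1 - 1 = y := by omega
    have e4 : y + 1 + 1 = y + 2 := by omega
    have e5 : y + 1 + 1 - 1 = y + 1 := by omega
    rw [e1, e2, e3, e4, e5]
    have key : 1 ≤ t * P + Q := by
      rcases hside with h3 | h3
      · have ht1 : 1 ≤ t := by omega
        have : P ≤ t * P := Nat.le_mul_of_pos_left P (by omega)
        omega
      · have hQ : 1 ≤ Q := Finset.one_le_prod' (fun i hi => by
          have h1' := Finset.mem_erase.1 hi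
          have h2' := Finset.mem_erase.1 h1'.2
          have := h3 i h2'.1 h1'.1
          omega)
        omega
    have expand : (y+1+t)*((y+2)*P) + (y+1)*Q = (y+2+t)*((y+1)*P) + (t*P + (y+1)*Q) := by ring
    have expand2 : (y+1)*Q = y*Q + Q := by ring
    omega

lemma moveC {n a : ℕ} {i0 : Fin a} {c : Fin a → ℕ}
    (h1 : ∀ i, 1 ≤ c i) (hsum : ∑ i, c i = n) {i j : Fin a} (hi : i ≠ i0) (hj : j ≠ i0)
    (hgap : c j + 2 ≤ c i) (hc0 : 2 ≤ c i0) :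
    ∃ c' : Fin a → ℕ, (∀ i, 1 ≤ c' i) ∧ (∑ i, c' i = n) ∧
      Phi n i0 c' < Phi n i0 c ∧ Hc i0 c < Hc i0 c' := by
  classical
  have hij : i ≠ j := by intro h; rw [h] at hgap; omega
  set c' := Function.update (Function.update c i (c i - 1)) j (c j + 1) with hc'
  have hiE : i ∈ Finset.univ.erase i0 := Finset.mem_erase.2 ⟨hi, Finset.mem_univ i⟩
  have hjE : j ∈ Finset.univ.erase i0 := Finset.mem_erase.2 ⟨hj, Finset.mem_univ j⟩
  have hdi : c' i = c i - 1 := by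
    rw [hc', Function.update_of_ne hij, Function.update_self]
  have hdj : c' j = c j + 1 := by rw [hc', Function.update_self]
  have hd0 : c' i0 = c i0 := by
    rw [hc', Function.update_of_ne (Ne.symm hj), Function.update_of_ne (Ne.symm hi)]
  have hother : ∀ k, k ≠ i → k ≠ j → c' k = c k := by
    intro k hk1 hk2; rw [hc', Function.update_of_ne hk2, Function.update_of_ne hk1]
  obtain ⟨w, hw⟩ : ∃ w, c i0 = w + 2 := ⟨c i0 - 2, by omega⟩
  obtain ⟨y, hy⟩ : ∃ y, c j = y + 1 := ⟨c j - 1, by have := h1 j; omega⟩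
  obtain ⟨t, ht⟩ : ∃ t, c i = y + 3 + t := ⟨c i - c j - 2, by omega⟩
  refine ⟨c', ?_, ?_, ?_, ?_⟩
  · intro k
    rcases eq_or_ne k i with rfl | hk1
    · rw [hdi]; omega
    rcases eq_or_ne k j with rfl | hk2
    · rw [hdj]; omega
    · rw [hother k hk1 hk2]; exact h1 k
  · rw [← hsum,
      sum_two_mem (g := c') (c := c) (Finset.mem_univ i) (Finset.mem_univ j) hij
        (fun k _ hk1 hk2 => hother k hk1 hk2),
      sum_two_mem (g := c) (c := c) (Finset.mem_univ i) (Finset.mem_univ j) hij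
        (fun k _ _ _ => rfl), hdi, hdj]
    have := h1 i
    omega
  · unfold Phi
    rw [sum_two_mem (g := fun k => c' k ^ 2) (c := fun k => c k ^ 2) (Finset.mem_univ i)
        (Finset.mem_univ j) hij
        (fun k _ hk1 hk2 => by show c' k ^ 2 = c k ^ 2; rw [hother k hk1 hk2]),
      sum_two_mem (g := fun k => c k ^ 2) (c := fun k => c k ^ 2) (Finset.mem_univ i)
        (Finset.mem_univ j) hij (fun k _ _ _ => rfl), hdi, hdj, hd0, hy, ht]
    have e1 : y + 3 + t - 1 = y + 2 + t := by omega
    have e2 : y + 1 + 1 = y + 2 := by omega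
    rw [e1, e2]
    have hsq : (y+2+t)^2 + (y+2)^2 + (2*t+2) = (y+3+t)^2 + (y+1)^2 := by ring
    omega
  · unfold Hc
    rw [prod_two_mem (g := c') (c := c) hiE hjE hij (fun k _ hk1 hk2 =>
          hother k hk1 hk2),
      prod_two_mem (g := fun k => c' k - 1) (c := fun k => c k - 1) hiE hjE hij
        (fun k _ hk1 hk2 => by
          show c' k - 1 = c k - 1; rw [hother k hk1 hk2]),
      prod_two_mem (g := c) (c := c) hiE hjE hij (fun _ _ _ _ => rfl),
      prod_two_mem (g := fun k => c k - 1) (c := fun k => c k - 1) hiE hjE hij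
        (fun _ _ _ _ => rfl),
      hdi, hdj, hd0]
    set P := ∏ k ∈ ((Finset.univ.erase i0).erase i).erase j, c k with hP'
    set Q := ∏ k ∈ ((Finset.univ.erase i0).erase i).erase j, (c k - 1) with hQ'
    have hP : 1 ≤ P := Finset.one_le_prod' (fun k _ => h1 k)
    rw [hw, hy, ht]
    have e1 : y + 3 + t - 1 = y + 2 + t := by omega
    have e2 : y + 2 + t - 1 = y + 1 + t := by omega
    have e3 : y + 1 - 1 = y := by omega
    have e4 : y + 1 + 1 = y + 2 := by omega
    have e5 : y + 1 + 1 - 1 = y + 1 := by omega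
    have e6 : w + 2 - 1 = w + 1 := by omega
    rw [e1, e2, e3, e4, e5, e6]
    have key : 0 < (w+1) * ((t+1) * P) := by positivity
    have expand : (w+1)*((y+2+t)*((y+2)*P)) + (y+1+t)*((y+1)*Q)
        = (w+1)*((y+3+t)*((y+1)*P)) + (w+1)*((t+1)*P) + ((y+2+t)*(y*Q) + (t+1)*Q) := by ring
    omega


lemma exists_move {n a : ℕ} {i0 : Fin a} {c : Fin a → ℕ} (ha : 0 < a) (h2a : 2 * a ≤ n)
    (h1 : ∀ i, 1 ≤ c i) (hsum : ∑ i, c i = n) (hbad : ¬ GoodC n a i0 c) :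
    ∃ c' : Fin a → ℕ, (∀ i, 1 ≤ c' i) ∧ (∑ i, c' i = n) ∧
      Phi n i0 c' < Phi n i0 c ∧ Hc i0 c < Hc i0 c' := by
  classical
  obtain ⟨q, hq⟩ : ∃ q, n / a = q := ⟨_, rfl⟩
  obtain ⟨r, hr⟩ : ∃ r, n % a = r := ⟨_, rfl⟩
  have hn : a * q + r = n := by rw [← hq, ← hr]; exact Nat.div_add_mod n a
  have hra : r < a := hr ▸ Nat.mod_lt _ ha
  have hq2 : 2 ≤ q := hq ▸ (Nat.le_div_iff_mul_le ha).2 h2a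
  have hceil := ceil_eq ha hn hra (by omega)
  have ha2 : 2 ≤ a := by
    by_contra hcon
    have ha1 : a = 1 := by omega
    apply hbad
    left
    have hall : ∀ i : Fin a, i = i0 := fun i => Fin.ext (by omega)
    have hsum1 : c i0 = n := by
      rw [← hsum]
      exact (Finset.sum_eq_single_of_mem i0 (Finset.mem_univ i0)
        (fun b _ hb => absurd (hall b) hb)).symm
    constructor
    · rw [hceil, if_pos (by omega), ← hq, ha1, Nat.div_one, hsum1]
    · intro i hi; exact absurd (hall i) hi
  by_cases hup : ∃ j, j ≠ i0 ∧ c i0 + 1 ≤ c j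
  · obtain ⟨j, hj, hupj⟩ := hup
    by_cases h3 : 3 ≤ a ∨ c i0 + 2 ≤ c j
    · exact moveB h1 hsum hj hupj h3
    · push_neg at h3
      exfalso
      apply hbad
      right
      have ha2' : a = 2 := by omega
      have hjc : c j = c i0 + 1 := by have := h3.2; omega
      have hE1 : (Finset.univ.erase i0).card = 1 := by
        rw [Finset.card_erase_of_mem (Finset.mem_univ i0), Finset.card_univ, Fintype.card_fin]
        omega
      obtain ⟨z, hz⟩ := Finset.card_eq_one.1 hE1
      have hjz : j = z := by
        have : j ∈ Finset.univ.erase i0 := Finset.mem_erase.2 ⟨hj, Finset.mem_univ j⟩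
        rw [hz, Finset.mem_singleton] at this
        exact this
      have hsum2 : c i0 + c j = n := by
        rw [← hsum, ← Finset.add_sum_erase _ _ (Finset.mem_univ i0), hz, hjz,
          Finset.sum_singleton]
      have h2q : a * q = 2 * q := by rw [ha2']
      refine ⟨ha2', ?_, ?_⟩
      · rw [hr]; omega
      · rw [hq]; omega
  · push_neg at hup
    have hc0max : ∀ j, j ≠ i0 → c j ≤ c i0 := fun j hj => by have := hup j hj; omega
    have hub : n ≤ a * c i0 := by
      rw [← hsum]
      calc ∑ i, c i ≤ ∑ _i : Fin a, c i0 := Finset.sum_le_sum (fun i _ => by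
              rcases eq_or_ne i i0 with rfl | h
              · exact le_rfl
              · exact hc0max i h)
        _ = a * c i0 := by rw [Finset.sum_const, Finset.card_univ, Fintype.card_fin, smul_eq_mul]
    have hc02 : 2 ≤ c i0 := by
      by_contra hcon
      have hc1 : c i0 ≤ 1 := by omega
      have := Nat.mul_le_mul_left a hc1
      omega
    by_cases hspread : ∃ i j, i ≠ i0 ∧ j ≠ i0 ∧ c j + 2 ≤ c i
    · obtain ⟨i, j, hi, hj, hgap⟩ := hspread
      exact moveC h1 hsum hi hj hgap hc02
    · push_neg at hspread
      have hEne : (Finset.univ.erase i0).Nonempty := by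
        rw [← Finset.card_pos, Finset.card_erase_of_mem (Finset.mem_univ i0),
          Finset.card_univ, Fintype.card_fin]
        omega
      obtain ⟨j, hjE, hjmin⟩ := Finset.exists_min_image (Finset.univ.erase i0) c hEne
      have hj : j ≠ i0 := (Finset.mem_erase.1 hjE).1
      have hbnd : ∀ i, i ≠ i0 → c j ≤ c i ∧ c i ≤ c j + 1 := fun i hi =>
        ⟨hjmin i (Finset.mem_erase.2 ⟨hi, Finset.mem_univ i⟩), by
          have := hspread i j hi hj; omega⟩
      by_cases hbig : c j + 2 ≤ c i0
      · rcases Nat.lt_or_ge (c j + 2) (c i0) with hb2 | hb2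
        · exact moveA h1 hsum hj hbig (Or.inl (by omega))
        · apply moveA h1 hsum hj hbig
          right
          intro k hk1 hk2
          by_contra hck
          have hck1 : c k = 1 := by have := h1 k; omega
          have hcj1 : c j = 1 := by have := (hbnd k hk1).1; have := h1 j; omega
          have hkE : k ∈ (Finset.univ.erase i0).erase j :=
            Finset.mem_erase.2 ⟨hk2, Finset.mem_erase.2 ⟨hk1, Finset.mem_univ k⟩⟩
          have hsplit : c i0 + (c j + (c k +
              ∑ i ∈ ((Finset.univ.erase i0).erase j).erase k, c i)) = n := by
            rw [← hsum, ← Finset.add_sum_erase _ _ (Finset.mem_univ i0),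
              ← Finset.add_sum_erase _ _ hjE, ← Finset.add_sum_erase _ _ hkE]
          have hrest : ∑ i ∈ ((Finset.univ.erase i0).erase j).erase k, c i
              ≤ ∑ _i ∈ ((Finset.univ.erase i0).erase j).erase k, 2 := by
            refine Finset.sum_le_sum (fun l hl => ?_)
            have hlE : l ∈ Finset.univ.erase i0 :=
              Finset.mem_of_mem_erase (Finset.mem_of_mem_erase hl)
            have := (hbnd l (Finset.mem_erase.1 hlE).1).2
            omega
          rw [Finset.sum_const, smul_eq_mul, Finset.card_erase_of_mem hkE,
            Finset.card_erase_of_mem hjE, Finset.card_erase_of_mem (Finset.mem_univ i0),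
            Finset.card_univ, Fintype.card_fin] at hrest
          have ha3 : 3 ≤ a := by
            have h1' : 0 < ((Finset.univ.erase i0).erase j).card := Finset.card_pos.2 ⟨k, hkE⟩
            rw [Finset.card_erase_of_mem hjE, Finset.card_erase_of_mem (Finset.mem_univ i0),
              Finset.card_univ, Fintype.card_fin] at h1'
            omega
          omega
      · exfalso
        apply hbad
        left
        have hb0 : c i0 ≤ c j + 1 := by omega
        have hcj0 : c j ≤ c i0 := hc0max j hj
        have hlow : a * c j ≤ n := by
          rw [← hsum]
          calc a * c j = ∑ _i : Fin a, c j := by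
                rw [Finset.sum_const, Finset.card_univ, Fintype.card_fin, smul_eq_mul]
            _ ≤ ∑ i, c i := Finset.sum_le_sum (fun i _ => by
                rcases eq_or_ne i i0 with rfl | h
                · omega
                · exact (hbnd i h).1)
        have hhigh : n ≤ a * (c j + 1) := by
          rw [← hsum]
          calc ∑ i, c i ≤ ∑ _i : Fin a, (c j + 1) := Finset.sum_le_sum (fun i _ => by
                rcases eq_or_ne i i0 with rfl | h
                · omega
                · exact (hbnd i h).2)
            _ = a * (c j + 1) := by
                rw [Finset.sum_const, Finset.card_univ, Fintype.card_fin, smul_eq_mul]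
        by_cases hcase : n = a * (c j + 1)
        · have hqv : q = c j + 1 := by rw [← hq, hcase, Nat.mul_div_cancel_left _ ha]
          have hrv : r = 0 := by rw [← hr, hcase]; exact Nat.mul_mod_right a _
          have hallc : ∀ i, c i = c j + 1 := by
            by_contra hcon
            push_neg at hcon
            obtain ⟨k, hk⟩ := hcon
            have hklt : c k < c j + 1 := by
              rcases eq_or_ne k i0 with rfl | h
              · omega
              · have := (hbnd k h).2; omega
            have hlt2 : ∑ i, c i < ∑ _i : Fin a, (c j + 1) := Finset.sum_lt_sum
                (fun i _ => by
                  rcases eq_or_ne i i0 with rfl | h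
                  · omega
                  · exact (hbnd i h).2)
                ⟨k, Finset.mem_univ k, hklt⟩
            rw [Finset.sum_const, Finset.card_univ, Fintype.card_fin, smul_eq_mul, hsum] at hlt2
            omega
          constructor
          · rw [hceil, if_pos hrv, hqv]; exact hallc i0
          · intro i hi
            rw [hq, hqv]
            have := hallc i
            omega
        · have hlt : n < a * (c j + 1) := lt_of_le_of_ne hhigh hcase
          have hqv : q = c j := by
            rw [← hq]
            exact Nat.div_eq_of_lt_le (by rw [mul_comm]; exact hlow) (by rw [mul_comm]; exact hlt)
          rw [hqv] at hn
          by_cases hr0 : r = 0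
          · have hallc : ∀ i, c i = c j := by
              by_contra hcon
              push_neg at hcon
              obtain ⟨k, hk⟩ := hcon
              have hkgt : c j < c k := by
                rcases eq_or_ne k i0 with rfl | h
                · omega
                · have := (hbnd k h).1; omega
              have hlt2 : ∑ _i : Fin a, c j < ∑ i, c i := Finset.sum_lt_sum
                  (fun i _ => by
                    rcases eq_or_ne i i0 with rfl | h
                    · omega
                    · exact (hbnd i h).1)
                  ⟨k, Finset.mem_univ k, hkgt⟩
              rw [Finset.sum_const, Finset.card_univ, Fintype.card_fin, smul_eq_mul, hsum] at hlt2
              omega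
            constructor
            · rw [hceil, if_pos hr0, hqv]; exact hallc i0
            · intro i hi
              rw [hq, hqv]
              have := hallc i
              omega
          · have hex : ∃ k, c j < c k := by
              by_contra hcon
              push_neg at hcon
              have hle2 : ∑ i, c i ≤ ∑ _i : Fin a, c j :=
                Finset.sum_le_sum (fun i _ => hcon i)
              rw [Finset.sum_const, Finset.card_univ, Fintype.card_fin, smul_eq_mul, hsum] at hle2
              omega
            obtain ⟨k, hk⟩ := hex
            have hk0 : c i0 = c j + 1 := by
              rcases eq_or_ne k i0 with rfl | hkne
              · omega
              · have h1' := hc0max k hkne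
                omega
            constructor
            · rw [hceil, if_neg hr0, hqv]; omega
            · intro i hi
              rw [hq, hqv]
              have := hbnd i hi
              omega

lemma opt_le {n a : ℕ} (ha : 0 < a) (h2a : 2 * a ≤ n) (i0 : Fin a) (c : Fin a → ℕ)
    (h1 : ∀ i, 1 ≤ c i) (hsum : ∑ i, c i = n) :
    Hc i0 c ≤ fFun n a ∧ (Hc i0 c = fFun n a ↔ GoodC n a i0 c) := by
  obtain ⟨N, hN⟩ : ∃ N, Phi n i0 c ≤ N := ⟨_, le_rfl⟩
  induction N generalizing c with
  | zero =>
    exfalso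
    have h2 : c i0 ^ 2 ≤ ∑ i, c i ^ 2 :=
      Finset.single_le_sum (f := fun i => c i ^ 2) (fun i _ => Nat.zero_le _) (Finset.mem_univ i0)
    have h3 : 1 ≤ c i0 ^ 2 := Nat.one_le_pow _ _ (h1 i0)
    have : 1 ≤ Phi n i0 c := by unfold Phi; omega
    omega
  | succ N ih =>
    by_cases hg : GoodC n a i0 c
    · have heq := Hc_of_good ha h2a hsum hg
      exact ⟨le_of_eq heq, ⟨fun _ => hg, fun _ => heq⟩⟩
    · obtain ⟨c', h1', hsum', hPhi, hHc⟩ := exists_move ha h2a h1 hsum hg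
      obtain ⟨hle, _⟩ := ih c' h1' hsum' (by omega)
      exact ⟨by omega, ⟨fun h => by omega, fun h => absurd h hg⟩⟩




section counting
variable {V : Type*} [Fintype V] {G : SimpleGraph V} {a : ℕ} {C : Fin a → Finset V}

lemma clique_unique (hdisj : ∀ i j, i ≠ j → Disjoint (C i) (C j)) {v : V} {i j : Fin a}
    (hi : v ∈ C i) (hj : v ∈ C j) : i = j := by
  by_contra hne
  exact Finset.disjoint_left.1 (hdisj i j hne) hi hj

lemma exists_unique_rep (hdisj : ∀ i j, i ≠ j → Disjoint (C i) (C j))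
    (hcover : ∀ v : V, ∃ i, v ∈ C i) (hclique : ∀ i, G.IsClique (C i : Set V))
    {s : Finset V} (hs : IsIndepFinset G s) (hcard : s.card = a) (i : Fin a) :
    ∃! v, v ∈ s ∧ v ∈ C i := by
  classical
  choose idx hidx using hcover
  have hinj : Set.InjOn idx s := by
    intro u hu v hv h
    by_contra hne
    exact hs hu hv hne (hclique (idx u) (hidx u) (show v ∈ (C (idx u) : Set V) by
      rw [h]; exact hidx v) hne)
  have himg : s.image idx = Finset.univ := by
    apply Finset.eq_univ_of_card
    rw [Finset.card_image_of_injOn hinj, hcard, Fintype.card_fin]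
  have hex : ∃ v, v ∈ s ∧ v ∈ C i := by
    have : i ∈ s.image idx := by rw [himg]; exact Finset.mem_univ i
    obtain ⟨v, hv, hvidx⟩ := Finset.mem_image.1 this
    exact ⟨v, hv, hvidx ▸ hidx v⟩
  obtain ⟨v, hv⟩ := hex
  refine ⟨v, hv, fun y hy => ?_⟩
  by_contra hne
  exact hs hy.1 hv.1 hne (hclique i hy.2 hv.2 hne)

end counting


section counting2
variable {V : Type*} [Fintype V] {G : SimpleGraph V} {a : ℕ} {C : Fin a → Finset V}
  {i0 : Fin a} {x₀ : V} {z : Fin a → V}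

lemma build_S1 [DecidableEq V] (hdisj : ∀ i j, i ≠ j → Disjoint (C i) (C j))
    (hclique : ∀ i, G.IsClique (C i : Set V)) (hx₀ : x₀ ∈ C i0)
    (hedge : ∀ u v : V, G.Adj u v → (∃ i, u ∈ C i ∧ v ∈ C i) ∨ u = x₀ ∨ v = x₀)
    (hz2 : ∀ i, i ≠ i0 → ∀ y, y ∈ C i ∧ G.Adj x₀ y → y = z i)
    (f : {i : Fin a // i ≠ i0} → V) (hf : ∀ i, f i ∈ (C i.1).erase (z i.1)) :
    IsIndepFinset G (insert x₀ (Finset.univ.image f)) ∧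
      (insert x₀ (Finset.univ.image f)).card = a ∧ x₀ ∈ insert x₀ (Finset.univ.image f) := by
  have hfC : ∀ i, f i ∈ C i.1 := fun i => Finset.mem_of_mem_erase (hf i)
  have hfx : ∀ i, f i ≠ x₀ := by
    intro i h
    exact i.2 (clique_unique hdisj (h ▸ hfC i) hx₀)
  have hfinj : Function.Injective f := by
    intro i j h
    exact Subtype.ext (clique_unique hdisj (h ▸ hfC i) (hfC j))
  have hnadj : ∀ i, ¬ G.Adj x₀ (f i) := by
    intro i hadj
    have := hz2 i.1 i.2 (f i) ⟨hfC i, hadj⟩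
    exact (Finset.mem_erase.1 (hf i)).1 this
  refine ⟨?_, ?_, Finset.mem_insert_self _ _⟩
  · intro u hu v hv huv hadj
    rcases Finset.mem_insert.1 hu with rfl | hu'
    · rcases Finset.mem_insert.1 hv with rfl | hv'
      · exact huv rfl
      · obtain ⟨i, _, rfl⟩ := Finset.mem_image.1 hv'
        exact hnadj i hadj
    · rcases Finset.mem_insert.1 hv with rfl | hv'
      · obtain ⟨i, _, rfl⟩ := Finset.mem_image.1 hu'
        exact hnadj i hadj.symm
      · obtain ⟨i, _, rfl⟩ := Finset.mem_image.1 hu'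
        obtain ⟨j, _, rfl⟩ := Finset.mem_image.1 hv'
        rcases hedge _ _ hadj with ⟨k, hk1, hk2⟩ | h | h
        · have hik : i.1 = k := clique_unique hdisj (hfC i) hk1
          have hjk : j.1 = k := clique_unique hdisj (hfC j) hk2
          exact huv (congrArg f (Subtype.ext (hik.trans hjk.symm)))
        · exact hfx i h
        · exact hfx j h
  · rw [Finset.card_insert_of_notMem, Finset.card_image_of_injective _ hfinj,
      Finset.card_univ]
    · have : Fintype.card {i : Fin a // i ≠ i0} = a - 1 := by
        rw [Fintype.card_subtype_compl, Fintype.card_fin, Fintype.card_subtype_eq]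
      rw [this]
      have ha : 0 < a := Fin.pos i0
      omega
    · intro hmem
      obtain ⟨i, _, hi⟩ := Finset.mem_image.1 hmem
      exact hfx i hi

lemma count_S1 (hdisj : ∀ i j, i ≠ j → Disjoint (C i) (C j))
    (hcover : ∀ v : V, ∃ i, v ∈ C i)
    (hclique : ∀ i, G.IsClique (C i : Set V))
    (hx₀ : x₀ ∈ C i0)
    (hedge : ∀ u v : V, G.Adj u v → (∃ i, u ∈ C i ∧ v ∈ C i) ∨ u = x₀ ∨ v = x₀)
    (hz1 : ∀ i, i ≠ i0 → z i ∈ C i ∧ G.Adj x₀ (z i))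
    (hz2 : ∀ i, i ≠ i0 → ∀ y, y ∈ C i ∧ G.Adj x₀ y → y = z i) :
    Set.ncard {s : Finset V | IsIndepFinset G s ∧ s.card = a ∧ x₀ ∈ s}
      = ∏ i ∈ Finset.univ.erase i0, ((C i).card - 1) := by
  classical
  have hx₀z : ∀ i : Fin a, i ≠ i0 → x₀ ≠ z i := by
    intro i hi h
    exact hi (clique_unique hdisj (h ▸ hx₀) (hz1 i hi).1).symm
  have e : {s : Finset V | IsIndepFinset G s ∧ s.card = a ∧ x₀ ∈ s} ≃
      ((i : {i : Fin a // i ≠ i0}) → ((C i.1).erase (z i.1) : Finset V)) :=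
    { toFun := fun s i => ⟨Finset.choose (fun v => v ∈ C i.1) s.1
        (exists_unique_rep hdisj hcover hclique s.2.1 s.2.2.1 i.1), by
          refine Finset.mem_erase.2 ⟨?_, Finset.choose_property _ _ _⟩
          intro hEq
          have hmem := Finset.choose_mem (fun v => v ∈ C i.1) s.1
            (exists_unique_rep hdisj hcover hclique s.2.1 s.2.2.1 i.1)
          rw [hEq] at hmem
          exact s.2.1 s.2.2.2 hmem (hx₀z i.1 i.2) (hz1 i.1 i.2).2⟩
      invFun := fun f => ⟨insert x₀ (Finset.univ.image (fun i => (f i : V))),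
        build_S1 hdisj hclique hx₀ hedge hz2 _ (fun i => (f i).2)⟩
      left_inv := by
        rintro ⟨s, hs1, hs2, hs3⟩
        apply Subtype.ext
        ext v
        simp only [Finset.mem_insert, Finset.mem_image, Finset.mem_univ, true_and]
        constructor
        · rintro (rfl | ⟨i, rfl⟩)
          · exact hs3
          · exact Finset.choose_mem _ _ _
        · intro hv
          obtain ⟨j, hj⟩ := hcover v
          rcases eq_or_ne j i0 with rfl | hne
          · left
            exact (exists_unique_rep hdisj hcover hclique hs1 hs2 j).unique ⟨hv, hj⟩ ⟨hs3, hx₀⟩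
          · right
            refine ⟨⟨j, hne⟩, ?_⟩
            exact (exists_unique_rep hdisj hcover hclique hs1 hs2 j).unique
              ⟨Finset.choose_mem _ _ _, Finset.choose_property _ _ _⟩ ⟨hv, hj⟩
      right_inv := by
        intro f
        funext i
        apply Subtype.ext
        have hObj := build_S1 hdisj hclique hx₀ hedge hz2
          (fun i => ((f i : V))) (fun i => (f i).2)
        exact (exists_unique_rep hdisj hcover hclique hObj.1 hObj.2.1 i.1).unique
          ⟨Finset.choose_mem _ _ _, Finset.choose_property _ _ _⟩
          ⟨Finset.mem_insert_of_mem (Finset.mem_image.2 ⟨i, Finset.mem_univ i, rfl⟩),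
            Finset.mem_of_mem_erase (f i).2⟩ }
  rw [← Nat.card_coe_set_eq, Nat.card_congr e, Nat.card_pi]
  have h1 : ∀ i : {i : Fin a // i ≠ i0},
      Nat.card ((C i.1).erase (z i.1) : Finset V) = (C i.1).card - 1 := by
    intro i
    rw [Nat.card_eq_finsetCard, Finset.card_erase_of_mem (hz1 i.1 i.2).1]
  rw [Finset.prod_congr rfl (fun i _ => h1 i)]
  exact (Finset.prod_subtype (p := fun i => i ≠ i0) (Finset.univ.erase i0)
    (fun x => by simp [Finset.mem_erase]) (fun i => (C i).card - 1)).symm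
end counting2


section counting3
variable {V : Type*} [Fintype V] {G : SimpleGraph V} {a : ℕ} {C : Fin a → Finset V}
  {i0 : Fin a} {x₀ : V}

lemma build_S0 [DecidableEq V] (hdisj : ∀ i j, i ≠ j → Disjoint (C i) (C j))
    (hx₀ : x₀ ∈ C i0)
    (hedge : ∀ u v : V, G.Adj u v → (∃ i, u ∈ C i ∧ v ∈ C i) ∨ u = x₀ ∨ v = x₀)
    (f : Fin a → V) (hf : ∀ i, f i ∈ (if i = i0 then (C i0).erase x₀ else C i)) :
    IsIndepFinset G (Finset.univ.image f) ∧
      (Finset.univ.image f).card = a ∧ x₀ ∉ Finset.univ.image f := by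
  have hfC : ∀ i, f i ∈ C i := by
    intro i
    have := hf i
    by_cases h : i = i0
    · subst h; rw [if_pos rfl] at this; exact Finset.mem_of_mem_erase this
    · rwa [if_neg h] at this
  have hfx : ∀ i, f i ≠ x₀ := by
    intro i h
    by_cases hi : i = i0
    · subst hi
      have := hf i
      rw [if_pos rfl] at this
      exact (Finset.mem_erase.1 this).1 h
    · exact hi (clique_unique hdisj (h ▸ hfC i) hx₀)
  have hfinj : Function.Injective f := by
    intro i j h
    exact clique_unique hdisj (h ▸ hfC i) (hfC j)
  have hxnm : x₀ ∉ Finset.univ.image f := by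
    intro hmem
    obtain ⟨i, _, hi⟩ := Finset.mem_image.1 hmem
    exact hfx i hi
  refine ⟨?_, ?_, hxnm⟩
  · intro u hu v hv huv hadj
    obtain ⟨i, _, rfl⟩ := Finset.mem_image.1 hu
    obtain ⟨j, _, rfl⟩ := Finset.mem_image.1 hv
    rcases hedge _ _ hadj with ⟨k, hk1, hk2⟩ | h | h
    · have hik : i = k := clique_unique hdisj (hfC i) hk1
      have hjk : j = k := clique_unique hdisj (hfC j) hk2
      exact huv (congrArg f (hik.trans hjk.symm))
    · exact hfx i h
    · exact hfx j h
  · rw [Finset.card_image_of_injective _ hfinj, Finset.card_univ, Fintype.card_fin]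

lemma count_S0 (hdisj : ∀ i j, i ≠ j → Disjoint (C i) (C j))
    (hcover : ∀ v : V, ∃ i, v ∈ C i)
    (hclique : ∀ i, G.IsClique (C i : Set V))
    (hx₀ : x₀ ∈ C i0)
    (hedge : ∀ u v : V, G.Adj u v → (∃ i, u ∈ C i ∧ v ∈ C i) ∨ u = x₀ ∨ v = x₀) :
    Set.ncard {s : Finset V | IsIndepFinset G s ∧ s.card = a ∧ x₀ ∉ s}
      = ((C i0).card - 1) * ∏ i ∈ Finset.univ.erase i0, (C i).card := by
  classical
  have e : {s : Finset V | IsIndepFinset G s ∧ s.card = a ∧ x₀ ∉ s} ≃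
      ((i : Fin a) → ((if i = i0 then (C i0).erase x₀ else C i) : Finset V)) :=
    { toFun := fun s i => ⟨Finset.choose (fun v => v ∈ C i) s.1
        (exists_unique_rep hdisj hcover hclique s.2.1 s.2.2.1 i), by
          by_cases h : i = i0
          · subst h
            rw [if_pos rfl]
            refine Finset.mem_erase.2 ⟨?_, Finset.choose_property _ _ _⟩
            intro hEq
            have hmem := Finset.choose_mem (fun v => v ∈ C i) s.1
              (exists_unique_rep hdisj hcover hclique s.2.1 s.2.2.1 i)
            rw [hEq] at hmem
            exact s.2.2.2 hmem
          · rw [if_neg h]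
            exact Finset.choose_property _ _ _⟩
      invFun := fun f => ⟨Finset.univ.image (fun i => (f i : V)),
        build_S0 hdisj hx₀ hedge _ (fun i => (f i).2)⟩
      left_inv := by
        rintro ⟨s, hs1, hs2, hs3⟩
        apply Subtype.ext
        ext v
        simp only [Finset.mem_image, Finset.mem_univ, true_and]
        constructor
        · rintro ⟨i, rfl⟩
          exact Finset.choose_mem _ _ _
        · intro hv
          obtain ⟨j, hj⟩ := hcover v
          refine ⟨j, ?_⟩
          exact (exists_unique_rep hdisj hcover hclique hs1 hs2 j).unique
            ⟨Finset.choose_mem _ _ _, Finset.choose_property _ _ _⟩ ⟨hv, hj⟩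
      right_inv := by
        intro f
        funext i
        apply Subtype.ext
        have hObj := build_S0 hdisj hx₀ hedge (fun i => ((f i : V))) (fun i => (f i).2)
        have hfC : (f i : V) ∈ C i := by
          have hsub : (if i = i0 then (C i0).erase x₀ else C i) ⊆ C i := by
            by_cases h : i = i0
            · subst h; rw [if_pos rfl]; exact Finset.erase_subset _ _
            · rw [if_neg h]
          exact hsub (f i).2
        exact (exists_unique_rep hdisj hcover hclique hObj.1 hObj.2.1 i).unique
          ⟨Finset.choose_mem _ _ _, Finset.choose_property _ _ _⟩
          ⟨Finset.mem_image.2 ⟨i, Finset.mem_univ i, rfl⟩, hfC⟩ }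
  rw [← Nat.card_coe_set_eq, Nat.card_congr e, Nat.card_pi]
  have h1 : ∀ i : Fin a,
      Nat.card ((if i = i0 then (C i0).erase x₀ else C i) : Finset V)
        = (if i = i0 then (C i0).card - 1 else (C i).card) := by
    intro i
    rw [Nat.card_eq_finsetCard]
    by_cases h : i = i0
    · subst h; rw [if_pos rfl, if_pos rfl, Finset.card_erase_of_mem hx₀]
    · rw [if_neg h, if_neg h]
  rw [Finset.prod_congr rfl (fun i _ => h1 i),
    ← Finset.mul_prod_erase Finset.univ _ (Finset.mem_univ i0), if_pos rfl]
  congr 1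
  exact Finset.prod_congr rfl (fun i hi => by rw [if_neg (Finset.mem_erase.1 hi).1])

lemma exists_max_indep {W : Type*} [Fintype W] (G' : SimpleGraph W) :
    ∃ s : Finset W, IsIndepFinset G' s ∧ s.card = indepNumber G' := by
  have hne : {k | ∃ s : Finset W, IsIndepFinset G' s ∧ s.card = k}.Nonempty :=
    ⟨0, ∅, fun u hu => absurd hu (Finset.notMem_empty u), Finset.card_empty⟩
  have hbdd : BddAbove {k | ∃ s : Finset W, IsIndepFinset G' s ∧ s.card = k} :=
    ⟨Fintype.card W, fun k ⟨s, _, hc⟩ => hc ▸ (Finset.card_le_univ s).trans_eq Finset.card_univ⟩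
  exact Nat.sSup_mem hne hbdd

lemma sum_card {n : ℕ} (hdisj : ∀ i j, i ≠ j → Disjoint (C i) (C j))
    (hcover : ∀ v : V, ∃ i, v ∈ C i) (hcard : Fintype.card V = n) :
    ∑ i, (C i).card = n := by
  classical
  have h1 : (Finset.univ : Finset (Fin a)).biUnion C = Finset.univ :=
    Finset.eq_univ_of_forall (fun v => Finset.mem_biUnion.2
      (let ⟨i, hi⟩ := hcover v; ⟨i, Finset.mem_univ i, hi⟩))
  calc ∑ i, (C i).card = ((Finset.univ : Finset (Fin a)).biUnion C).card :=
        (Finset.card_biUnion (fun i _ j _ hij => hdisj i j hij)).symm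
    _ = n := by rw [h1, Finset.card_univ, hcard]

lemma count_total (hdisj : ∀ i j, i ≠ j → Disjoint (C i) (C j))
    (hcover : ∀ v : V, ∃ i, v ∈ C i)
    (hclique : ∀ i, G.IsClique (C i : Set V))
    (hx₀ : x₀ ∈ C i0)
    (hedge : ∀ u v : V, G.Adj u v → (∃ i, u ∈ C i ∧ v ∈ C i) ∨ u = x₀ ∨ v = x₀)
    (hone : ∀ i, i ≠ i0 → ∃! z, z ∈ C i ∧ G.Adj x₀ z)
    (hα : indepNumber G = a) :
    numMaxIndep G = Hc i0 (fun i => (C i).card) := by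
  classical
  have hone' : ∀ i : Fin a, ∃ w : V, (i ≠ i0 → (w ∈ C i ∧ G.Adj x₀ w)) ∧
      (i ≠ i0 → ∀ y, y ∈ C i ∧ G.Adj x₀ y → y = w) := by
    intro i
    by_cases h : i = i0
    · exact ⟨x₀, fun h' => absurd h h', fun h' => absurd h h'⟩
    · obtain ⟨w, hw, huq⟩ := hone i h
      exact ⟨w, fun _ => hw, fun _ y hy => huq y hy⟩
  choose z hz1 hz2 using hone'
  rw [numMaxIndep, hα]
  have hsplit : {s : Finset V | IsIndepFinset G s ∧ s.card = a}
      = {s : Finset V | IsIndepFinset G s ∧ s.card = a ∧ x₀ ∉ s}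
        ∪ {s : Finset V | IsIndepFinset G s ∧ s.card = a ∧ x₀ ∈ s} := by
    ext s
    simp only [Set.mem_setOf_eq, Set.mem_union]
    tauto
  rw [hsplit, Set.ncard_union_eq (by
      rw [Set.disjoint_left]
      rintro s ⟨_, _, h⟩ ⟨_, _, h'⟩
      exact h h') (Set.toFinite _) (Set.toFinite _)]
  rw [count_S0 hdisj hcover hclique hx₀ hedge,
    count_S1 hdisj hcover hclique hx₀ hedge hz1 hz2, Hc]
end counting3


section fgraph
variable {n a : ℕ}

/-- The residue classes, as cliques of `Fgraph n a`. -/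
def CF (n a : ℕ) : Fin a → Finset (Fin n) :=
  fun i => Finset.univ.filter (fun v => v.val % a = i.val)

lemma mem_CF {i : Fin a} {v : Fin n} : v ∈ CF n a i ↔ v.val % a = i.val := by
  simp [CF]

lemma CF_card (ha : 0 < a) (han : a ≤ n) (i : Fin a) :
    (CF n a i).card = n / a + (if i.val < n % a then 1 else 0) := by
  classical
  have hn : a * (n / a) + n % a = n := Nat.div_add_mod n a
  have hra : n % a < a := Nat.mod_lt _ ha
  have hia : i.val < a := i.2
  rw [← Finset.card_range (n / a + (if i.val < n % a then 1 else 0))]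
  apply Finset.card_bij' (fun v _ => v.val / a)
    (fun t ht => (⟨i.val + t * a, by
      rw [Finset.mem_range] at ht
      by_cases hir : i.val < n % a
      · rw [if_pos hir] at ht
        have h1 : t * a ≤ (n / a) * a := Nat.mul_le_mul_right a (by omega)
        have h2 : (n / a) * a = a * (n / a) := Nat.mul_comm _ _
        omega
      · rw [if_neg hir] at ht
        have h1 : t * a + a ≤ (n / a) * a := by
          have := Nat.mul_le_mul_right a (show t + 1 ≤ n / a by omega)
          rw [Nat.add_mul, one_mul] at this
          exact this
        have h2 : (n / a) * a = a * (n / a) := Nat.mul_comm _ _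
        omega⟩ : Fin n))
  case hi =>
    intro v hv
    have hv' := mem_CF.1 hv
    rw [Finset.mem_range]
    have hdm : a * (v.val / a) + i.val = v.val := by rw [← hv']; exact Nat.div_add_mod _ _
    have hvn : v.val < n := v.2
    by_cases hir : i.val < n % a
    · rw [if_pos hir]
      by_contra hcon
      have : n / a + 1 ≤ v.val / a := by omega
      have := Nat.mul_le_mul_left a this
      rw [Nat.mul_add, Nat.mul_one] at this
      omega
    · rw [if_neg hir]
      by_contra hcon
      have : n / a ≤ v.val / a := by omega
      have := Nat.mul_le_mul_left a this
      omega
  case hj =>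
    intro t ht
    apply mem_CF.2
    show (i.val + t * a) % a = i.val
    rw [Nat.mul_comm]
    exact dm_mod t i.val hia
  case left_inv =>
    intro v hv
    have hv' := mem_CF.1 hv
    apply Fin.ext
    show i.val + v.val / a * a = v.val
    have hdm : a * (v.val / a) + i.val = v.val := by rw [← hv']; exact Nat.div_add_mod _ _
    have hcm : v.val / a * a = a * (v.val / a) := Nat.mul_comm _ _
    omega
  case right_inv =>
    intro t ht
    show (i.val + t * a) / a = t
    rw [Nat.mul_comm]
    exact dm_div t i.val ha hia

lemma CF_disj : ∀ i j : Fin a, i ≠ j → Disjoint (CF n a i) (CF n a j) := by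
  intro i j hij
  rw [Finset.disjoint_left]
  intro v hvi hvj
  rw [mem_CF] at hvi hvj
  exact hij (Fin.ext (hvi ▸ hvj))

lemma CF_cover (ha : 0 < a) : ∀ v : Fin n, ∃ i, v ∈ CF n a i :=
  fun v => ⟨⟨v.val % a, Nat.mod_lt _ ha⟩, mem_CF.2 rfl⟩

lemma CF_clique : ∀ i, (Fgraph n a).IsClique ((CF n a i) : Set (Fin n)) := by
  intro i u hu v hv huv
  rw [Finset.mem_coe, mem_CF] at hu hv
  exact ⟨huv, Or.inl (hu.trans hv.symm)⟩

lemma CF_edge (ha : 0 < a) (hn0 : 0 < n) : ∀ u v : Fin n, (Fgraph n a).Adj u v →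
    (∃ i, u ∈ CF n a i ∧ v ∈ CF n a i) ∨ u = (⟨0, hn0⟩ : Fin n) ∨ v = ⟨0, hn0⟩ := by
  rintro u v ⟨hne, h | h | h⟩
  · exact Or.inl ⟨⟨u.val % a, Nat.mod_lt _ ha⟩, mem_CF.2 rfl, mem_CF.2 h.symm⟩
  · exact Or.inr (Or.inl (Fin.ext h.1))
  · exact Or.inr (Or.inr (Fin.ext h.1))

lemma CF_one (ha : 0 < a) (han : a ≤ n) (hn0 : 0 < n) :
    ∀ i : Fin a, i ≠ ⟨0, ha⟩ →
      ∃! z, z ∈ CF n a i ∧ (Fgraph n a).Adj (⟨0, hn0⟩ : Fin n) z := by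
  intro i hi
  have hi0 : i.val ≠ 0 := fun h => hi (Fin.ext h)
  have hia : i.val < a := i.2
  refine ⟨⟨i.val, by omega⟩, ⟨mem_CF.2 (Nat.mod_eq_of_lt hia), ?_, ?_⟩, ?_⟩
  · intro h
    exact hi0 (congrArg Fin.val h).symm
  · exact Or.inr (Or.inl ⟨rfl, hia⟩)
  · rintro y ⟨hy, hyne, hcase | hcase | hcase⟩
    · rw [mem_CF] at hy
      rw [Nat.zero_mod] at hcase
      omega
    · apply Fin.ext
      rw [mem_CF] at hy
      have := Nat.mod_eq_of_lt hcase.2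
      simp only []
      omega
    · exfalso
      rw [mem_CF] at hy
      rw [hcase.1, Nat.zero_mod] at hy
      omega

lemma indep_le_cliques {V : Type*} {G : SimpleGraph V} {a : ℕ} {C : Fin a → Finset V}
    (hdisj : ∀ i j, i ≠ j → Disjoint (C i) (C j))
    (hcover : ∀ v : V, ∃ i, v ∈ C i) (hclique : ∀ i, G.IsClique (C i : Set V))
    {s : Finset V} (hs : IsIndepFinset G s) : s.card ≤ a := by
  classical
  choose idx hidx using hcover
  have hinj : Set.InjOn idx s := by
    intro u hu v hv h
    by_contra hne
    exact hs hu hv hne (hclique (idx u) (hidx u) (show v ∈ (C (idx u) : Set V) by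
      rw [h]; exact hidx v) hne)
  rw [← Finset.card_image_of_injOn hinj]
  exact (Finset.card_le_univ _).trans_eq (by simp)

lemma Fgraph_indepNumber (ha : 0 < a) (h2a : 2 * a ≤ n) :
    indepNumber (Fgraph n a) = a := by
  classical
  apply le_antisymm
  · refine csSup_le ?_ ?_
    · exact ⟨0, ⟨∅, fun u hu => absurd hu (Finset.notMem_empty u), Finset.card_empty⟩⟩
    · rintro k ⟨s, hs, rfl⟩
      exact indep_le_cliques CF_disj (CF_cover ha) CF_clique hs
  · apply le_csSup
    · exact ⟨Fintype.card (Fin n), fun k ⟨s, _, hc⟩ =>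
        hc ▸ (Finset.card_le_univ s).trans_eq Finset.card_univ⟩
    · refine ⟨Finset.univ.image (fun i : Fin a => (⟨a + i.val, by omega⟩ : Fin n)), ?_, ?_⟩
      · intro u hu v hv huv hadj
        obtain ⟨i, _, rfl⟩ := Finset.mem_image.1 hu
        obtain ⟨j, _, rfl⟩ := Finset.mem_image.1 hv
        obtain ⟨hne, hc | hc | hc⟩ := hadj
        · simp only [] at hc
          rw [Nat.add_mod_left, Nat.add_mod_left, Nat.mod_eq_of_lt i.2,
            Nat.mod_eq_of_lt j.2] at hc
          exact huv (by apply Fin.ext; show a + i.val = a + j.val; omega)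
        · simp only [] at hc
          omega
        · simp only [] at hc
          omega
      · rw [Finset.card_image_of_injective, Finset.card_univ, Fintype.card_fin]
        intro i j h
        have := congrArg Fin.val h
        simp only [] at this
        exact Fin.ext (by omega)

end fgraph


lemma Fgraph_count {n a : ℕ} (ha : 0 < a) (h2a : 2 * a ≤ n) :
    numMaxIndep (Fgraph n a) = fFun n a := by
  have han : a ≤ n := by omega
  have hn0 : 0 < n := by omega
  have hx0 : (⟨0, hn0⟩ : Fin n) ∈ CF n a ⟨0, ha⟩ := mem_CF.2 (by simp)
  have h1 := count_total (G := Fgraph n a) CF_disj (CF_cover ha) CF_clique hx0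
    (CF_edge ha hn0) (CF_one ha han hn0) (Fgraph_indepNumber ha h2a)
  rw [h1]
  apply Hc_of_good ha h2a
  · exact sum_card CF_disj (CF_cover ha) (Fintype.card_fin n)
  · left
    have hq2 : 2 ≤ n / a := (Nat.le_div_iff_mul_le ha).2 h2a
    constructor
    · show (CF n a ⟨0, ha⟩).card = (n + a - 1) / a
      rw [CF_card ha han, ceil_eq ha (Nat.div_add_mod n a) (Nat.mod_lt _ ha) (by omega)]
      by_cases hr : n % a = 0
      · rw [if_pos hr]
        simp [hr]
      · rw [if_neg hr]
        have : (⟨0, ha⟩ : Fin a).val = 0 := rfl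
        rw [this, if_pos (by omega)]
    · intro i _
      show n / a ≤ (CF n a i).card ∧ (CF n a i).card ≤ n / a + 1
      rw [CF_card ha han]
      split_ifs <;> omega

lemma indep_map {V W : Type*} {G : SimpleGraph V} {H : SimpleGraph W} (e : G ≃g H)
    {s : Finset V} (hs : IsIndepFinset G s) :
    IsIndepFinset H (s.map e.toEquiv.toEmbedding) := by
  intro u hu v hv huv hadj
  obtain ⟨u', hu', rfl⟩ := Finset.mem_map.1 hu
  obtain ⟨v', hv', rfl⟩ := Finset.mem_map.1 hv
  exact hs hu' hv' (fun h => huv (congrArg _ h)) (e.map_adj_iff.1 hadj)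

lemma indepNumber_congr {V W : Type*} [Fintype V] [Fintype W] {G : SimpleGraph V}
    {H : SimpleGraph W} (e : G ≃g H) : indepNumber G = indepNumber H := by
  unfold indepNumber
  congr 1
  ext k
  constructor
  · rintro ⟨s, hs, rfl⟩
    exact ⟨s.map e.toEquiv.toEmbedding, indep_map e hs, Finset.card_map _⟩
  · rintro ⟨s, hs, rfl⟩
    exact ⟨s.map e.symm.toEquiv.toEmbedding, indep_map e.symm hs, Finset.card_map _⟩

lemma numMaxIndep_congr {V W : Type*} [Fintype V] [Fintype W] {G : SimpleGraph V}
    {H : SimpleGraph W} (e : G ≃g H) : numMaxIndep G = numMaxIndep H := by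
  classical
  unfold numMaxIndep
  have hα := indepNumber_congr e
  have himg : {t : Finset W | IsIndepFinset H t ∧ t.card = indepNumber H}
      = (fun s : Finset V => s.map e.toEquiv.toEmbedding) ''
        {s : Finset V | IsIndepFinset G s ∧ s.card = indepNumber G} := by
    ext t
    simp only [Set.mem_setOf_eq, Set.mem_image]
    constructor
    · rintro ⟨ht, hc⟩
      refine ⟨t.map e.symm.toEquiv.toEmbedding, ⟨indep_map e.symm ht, by rw [Finset.card_map, hc, hα]⟩, ?_⟩
      ext w
      constructor
      · intro hw
        obtain ⟨u, hu, rfl⟩ := Finset.mem_map.1 hw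
        obtain ⟨v, hv, rfl⟩ := Finset.mem_map.1 hu
        have h5 : (e.toEquiv.toEmbedding (e.symm.toEquiv.toEmbedding v)) = v := by
          simp
        rwa [h5]
      · intro hw
        exact Finset.mem_map.2 ⟨e.symm w, Finset.mem_map.2 ⟨w, hw, rfl⟩, by simp⟩
    · rintro ⟨s, ⟨hs, hc⟩, rfl⟩
      exact ⟨indep_map e hs, by rw [Finset.card_map, hc, hα]⟩
  rw [himg, Set.ncard_image_of_injective _ (Finset.map_injective _)]


lemma my_subtypeCongr_pos {α : Type*} {p q : α → Prop} [DecidablePred p] [DecidablePred q]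
    (e : { x // p x } ≃ { x // q x }) (f : { x // ¬p x } ≃ { x // ¬q x }) {x : α} (h : p x) :
    Equiv.subtypeCongr e f x = ↑(e ⟨x, h⟩) := by
  simp [Equiv.subtypeCongr, Equiv.sumCompl_symm_apply_of_pos h]

lemma my_subtypeCongr_neg {α : Type*} {p q : α → Prop} [DecidablePred p] [DecidablePred q]
    (e : { x // p x } ≃ { x // q x }) (f : { x // ¬p x } ≃ { x // ¬q x }) {x : α} (h : ¬ p x) :
    Equiv.subtypeCongr e f x = ↑(f ⟨x, h⟩) := by
  simp [Equiv.subtypeCongr, Equiv.sumCompl_symm_apply_of_neg h]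

lemma exists_tau {n a : ℕ} (ha : 0 < a) (h2a : 2 * a ≤ n) (c : Fin a → ℕ)
    (hsum : ∑ i, c i = n)
    (hg0 : c ⟨0, ha⟩ = (n + a - 1) / a)
    (hgb : ∀ i, i ≠ ⟨0, ha⟩ → n / a ≤ c i ∧ c i ≤ n / a + 1) :
    ∃ τ : Fin a ≃ Fin a, τ ⟨0, ha⟩ = ⟨0, ha⟩ ∧
      ∀ i, c (τ i) = n / a + (if i.val < n % a then 1 else 0) := by
  classical
  obtain ⟨q, hq⟩ : ∃ q, n / a = q := ⟨_, rfl⟩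
  obtain ⟨r, hr⟩ : ∃ r, n % a = r := ⟨_, rfl⟩
  have hn : a * q + r = n := by rw [← hq, ← hr]; exact Nat.div_add_mod n a
  have hra : r < a := hr ▸ Nat.mod_lt _ ha
  have hq2 : 2 ≤ q := hq ▸ (Nat.le_div_iff_mul_le ha).2 h2a
  have hceil := ceil_eq ha hn hra (by omega)
  rw [hceil] at hg0
  rw [hq, hr]
  set i0 : Fin a := ⟨0, ha⟩ with hi0
  have hvali0 : i0.val = 0 := by rw [hi0]
  clear_value i0
  rw [hq] at hgb
  -- cardinality of the big-clique index set among i ≠ i0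
  have hsumE : c i0 + ∑ i ∈ Finset.univ.erase i0, c i = n := by
    rw [Finset.add_sum_erase _ _ (Finset.mem_univ i0)]; exact hsum
  have hEcard : (Finset.univ.erase i0).card = a - 1 := by
    rw [Finset.card_erase_of_mem (Finset.mem_univ i0), Finset.card_univ, Fintype.card_fin]
  set S := (Finset.univ.erase i0).filter (fun i => c i = q + 1) with hSdef
  set T := (Finset.univ.erase i0).filter (fun i => ¬ c i = q + 1) with hTdef
  have hkey : ∀ i ∈ T, c i = q := by
    intro i hi
    rw [hTdef, Finset.mem_filter] at hi
    have hne : i ≠ i0 := (Finset.mem_erase.1 hi.1).1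
    have := hgb i hne
    omega
  have hST : S.card + T.card = (Finset.univ.erase i0).card :=
    Finset.card_filter_add_card_filter_not _
  have hsplit : ∑ i ∈ Finset.univ.erase i0, c i = S.card * (q + 1) + T.card * q := by
    rw [← Finset.sum_filter_add_sum_filter_not (Finset.univ.erase i0) (fun i => c i = q + 1),
      ← hSdef, ← hTdef,
      Finset.sum_congr rfl (fun i hi => (Finset.mem_filter.1 hi).2), Finset.sum_const,
      smul_eq_mul, Finset.sum_congr rfl hkey, Finset.sum_const, smul_eq_mul]
  have e1 : c i0 + (S.card * (q + 1) + T.card * q) = n := by rw [← hsplit]; exact hsumE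
  have e2 : S.card * (q + 1) + T.card * q = S.card + (S.card + T.card) * q := by ring
  rw [e2, hST, hEcard] at e1
  have hmulA : (a - 1) * q = a * q - q := by rw [Nat.sub_mul, one_mul]
  rw [hmulA] at e1
  have haq : q ≤ a * q := Nat.le_mul_of_pos_left q ha
  have hScard : S.card = r - 1 := by
    by_cases hr0 : r = 0
    · rw [if_pos hr0] at hg0; omega
    · rw [if_neg hr0] at hg0; omega
  -- the target big-index set
  have hBcard : (Finset.univ.filter (fun i : Fin a => i ≠ i0 ∧ i.val < r)).card = r - 1 := by
    rw [← Nat.card_Ico 1 r]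
    apply Finset.card_bij' (fun (i : Fin a) _ => i.val)
      (fun x hx => (⟨x, by rw [Finset.mem_Ico] at hx; omega⟩ : Fin a))
    case hi =>
      intro i hi
      rw [Finset.mem_filter] at hi
      rw [Finset.mem_Ico]
      refine ⟨?_, hi.2.2⟩
      by_contra hcon
      exact hi.2.1 (Fin.ext (by omega))
    case hj =>
      intro x hx
      rw [Finset.mem_Ico] at hx
      rw [Finset.mem_filter]
      refine ⟨Finset.mem_univ _, fun h => ?_, hx.2⟩
      have h2 : x = i0.val := congrArg Fin.val h
      omega
    case left_inv => intro i _; exact Fin.ext rfl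
    case right_inv => intro x _; rfl
  have hAcard : (Finset.univ.filter (fun i : Fin a => i ≠ i0 ∧ c i = q + 1)).card = r - 1 := by
    rw [← hScard]
    congr 1
    ext i
    simp only [hSdef, Finset.mem_filter, Finset.mem_erase, Finset.mem_univ, true_and]
    tauto
  have hcard1 : Fintype.card {i : Fin a // i ≠ i0 ∧ i.val < r}
      = Fintype.card {i : Fin a // i ≠ i0 ∧ c i = q + 1} := by
    rw [Fintype.card_subtype, Fintype.card_subtype, hBcard, hAcard]
  have hcard2 : Fintype.card {i : Fin a // ¬(i ≠ i0 ∧ i.val < r)}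
      = Fintype.card {i : Fin a // ¬(i ≠ i0 ∧ c i = q + 1)} := by
    rw [Fintype.card_subtype_compl, Fintype.card_subtype_compl, hcard1]
  set e₁ := Fintype.equivOfCardEq hcard1 with he₁
  set e₂ := Fintype.equivOfCardEq hcard2 with he₂
  have hni0B : ¬(i0 ≠ i0 ∧ i0.val < r) := fun h => h.1 rfl
  have hni0A : ¬(i0 ≠ i0 ∧ c i0 = q + 1) := fun h => h.1 rfl
  set e₂' := e₂.trans (Equiv.swap (e₂ ⟨i0, hni0B⟩) ⟨i0, hni0A⟩) with he₂'
  set τ := Equiv.subtypeCongr e₁ e₂' with hτ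
  have hτ0 : τ i0 = i0 := by
    rw [hτ, my_subtypeCongr_neg e₁ e₂' hni0B]
    show ((e₂' ⟨i0, hni0B⟩ : {i : Fin a // ¬(i ≠ i0 ∧ c i = q + 1)}) : Fin a) = i0
    rw [he₂']
    simp [Equiv.swap_apply_left]
  refine ⟨τ, hτ0, ?_⟩
  intro i
  rcases eq_or_ne i i0 with rfl | hne
  · rw [hτ0, hvali0]
    by_cases hr0 : r = 0
    · rw [if_pos hr0] at hg0
      rw [if_neg (by omega)]
      omega
    · rw [if_neg hr0] at hg0
      rw [if_pos (by omega)]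
      omega
  · by_cases hlt : i.val < r
    · have hp : (i ≠ i0 ∧ i.val < r) := ⟨hne, hlt⟩
      have : τ i = ↑(e₁ ⟨i, hp⟩) := by rw [hτ]; exact my_subtypeCongr_pos e₁ e₂' hp
      rw [this, if_pos hlt]
      exact (e₁ ⟨i, hp⟩).2.2
    · have hp : ¬(i ≠ i0 ∧ i.val < r) := fun h => hlt h.2
      have hv : τ i = ↑(e₂' ⟨i, hp⟩) := by rw [hτ]; exact my_subtypeCongr_neg e₁ e₂' hp
      have hne' : τ i ≠ i0 := by
        intro h
        exact hne (τ.injective (h.trans hτ0.symm))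
      have hnq : ¬ c (τ i) = q + 1 := by
        have := (e₂' ⟨i, hp⟩).2
        rw [← hv] at this
        exact fun h => this ⟨hne', h⟩
      have := hgb (τ i) hne'
      rw [if_neg hlt]
      omega


lemma build_iso {V : Type*} [Fintype V] {G : SimpleGraph V} {n a : ℕ} (ha : 0 < a)
    (h2a : 2 * a ≤ n) (hcard : Fintype.card V = n)
    {C : Fin a → Finset V}
    (hdisj : ∀ i j, i ≠ j → Disjoint (C i) (C j))
    (hcover : ∀ v : V, ∃ i, v ∈ C i)
    (hclique : ∀ i, G.IsClique (C i : Set V))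
    {x₀ : V} (hx₀ : x₀ ∈ C ⟨0, ha⟩)
    (hedge : ∀ u v : V, G.Adj u v → (∃ i, u ∈ C i ∧ v ∈ C i) ∨ u = x₀ ∨ v = x₀)
    (hone : ∀ i, i ≠ ⟨0, ha⟩ → ∃! z, z ∈ C i ∧ G.Adj x₀ z)
    {τ : Fin a ≃ Fin a} (hτ0 : τ ⟨0, ha⟩ = ⟨0, ha⟩)
    (hτc : ∀ i, (C (τ i)).card = n / a + (if i.val < n % a then 1 else 0)) :
    Nonempty (G ≃g Fgraph n a) := by
  classical
  have hn0 : 0 < n := by omega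
  have han : a ≤ n := by omega
  have hone' : ∀ i : Fin a, ∃ w : V, (i ≠ ⟨0, ha⟩ → (w ∈ C i ∧ G.Adj x₀ w)) ∧
      (i ≠ ⟨0, ha⟩ → ∀ y, y ∈ C i ∧ G.Adj x₀ y → y = w) := by
    intro i
    by_cases h : i = ⟨0, ha⟩
    · exact ⟨x₀, fun h' => absurd h h', fun h' => absurd h h'⟩
    · obtain ⟨w, hw, huq⟩ := hone i h
      exact ⟨w, fun _ => hw, fun _ y hy => huq y hy⟩
  choose z hz1 hz2 using hone'
  choose idx hidx using hcover
  have hτne : ∀ i : Fin a, i ≠ ⟨0, ha⟩ → τ i ≠ ⟨0, ha⟩ := fun i hi h =>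
    hi (τ.injective (h.trans hτ0.symm))
  have hgc : ∀ i, (CF n a i).card = (C (τ i)).card := fun i => by
    rw [CF_card ha han, hτc]
  have hpinmem : ∀ i : Fin a, (⟨i.val, lt_of_lt_of_le i.2 han⟩ : Fin n) ∈ CF n a i :=
    fun i => mem_CF.2 (Nat.mod_eq_of_lt i.2)
  have hvtx : ∀ i : Fin a, (if i = ⟨0, ha⟩ then x₀ else z (τ i)) ∈ C (τ i) := by
    intro i
    by_cases h : i = ⟨0, ha⟩
    · rw [if_pos h, h, hτ0]; exact hx₀
    · rw [if_neg h]; exact (hz1 (τ i) (hτne i h)).1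
  let g : ∀ i : Fin a, (((CF n a i) : Finset (Fin n)) ≃ ((C (τ i)) : Finset V)) := fun i =>
    (Finset.equivOfCardEq (hgc i)).trans
      (Equiv.swap ((Finset.equivOfCardEq (hgc i)) ⟨_, hpinmem i⟩) ⟨_, hvtx i⟩)
  have hgpin : ∀ i : Fin a, (g i ⟨⟨i.val, lt_of_lt_of_le i.2 han⟩, hpinmem i⟩ : V)
      = (if i = ⟨0, ha⟩ then x₀ else z (τ i)) := by
    intro i
    show ((Equiv.swap ((Finset.equivOfCardEq (hgc i)) ⟨_, hpinmem i⟩) ⟨_, hvtx i⟩)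
      ((Finset.equivOfCardEq (hgc i)) ⟨_, hpinmem i⟩) : V) = _
    rw [Equiv.swap_apply_left]
  let F : Fin n → V := fun w => (g ⟨w.val % a, Nat.mod_lt _ ha⟩ ⟨w, mem_CF.2 rfl⟩ : V)
  have hF : ∀ (i : Fin a) (w : Fin n) (h : w ∈ CF n a i), F w = (g i ⟨w, h⟩ : V) := by
    intro i w h
    have hidxF : (⟨w.val % a, Nat.mod_lt _ ha⟩ : Fin a) = i := Fin.ext (mem_CF.1 h)
    subst hidxF
    rfl
  have hFmem : ∀ w : Fin n, F w ∈ C (τ ⟨w.val % a, Nat.mod_lt _ ha⟩) :=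
    fun w => (g ⟨w.val % a, Nat.mod_lt _ ha⟩ ⟨w, mem_CF.2 rfl⟩).2
  have hFinj : Function.Injective F := by
    intro w w' hww
    have h2 : F w ∈ C (τ ⟨w'.val % a, Nat.mod_lt _ ha⟩) := by rw [hww]; exact hFmem w'
    have hi : (⟨w.val % a, Nat.mod_lt _ ha⟩ : Fin a) = ⟨w'.val % a, Nat.mod_lt _ ha⟩ :=
      τ.injective (clique_unique hdisj (hFmem w) h2)
    have hw' : w' ∈ CF n a ⟨w.val % a, Nat.mod_lt _ ha⟩ := by rw [hi]; exact mem_CF.2 rfl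
    rw [hF ⟨w.val % a, Nat.mod_lt _ ha⟩ w' hw'] at hww
    have := (g ⟨w.val % a, Nat.mod_lt _ ha⟩).injective (Subtype.ext hww)
    exact congrArg Subtype.val this
  have hFsurj : Function.Surjective F := by
    intro v
    have hvC : v ∈ C (τ (τ.symm (idx v))) := by rw [Equiv.apply_symm_apply]; exact hidx v
    refine ⟨((g (τ.symm (idx v))).symm ⟨v, hvC⟩ : Fin n), ?_⟩
    rw [hF (τ.symm (idx v)) _ ((g (τ.symm (idx v))).symm ⟨v, hvC⟩).2, Subtype.coe_eta]
    exact congrArg Subtype.val ((g (τ.symm (idx v))).apply_symm_apply ⟨v, hvC⟩)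
  have hx0F : F ⟨0, hn0⟩ = x₀ := by
    have h0 : (⟨0, hn0⟩ : Fin n) ∈ CF n a ⟨0, ha⟩ := mem_CF.2 (by simp)
    have hp := hgpin ⟨0, ha⟩
    rw [if_pos rfl] at hp
    exact (hF ⟨0, ha⟩ _ h0).trans hp
  have hzF : ∀ i : Fin a, i ≠ ⟨0, ha⟩ → F ⟨i.val, lt_of_lt_of_le i.2 han⟩ = z (τ i) := by
    intro i hi
    have hp := hgpin i
    rw [if_neg hi] at hp
    exact (hF i _ (hpinmem i)).trans hp
  have main : ∀ w w' : Fin n, G.Adj (F w) (F w') ↔ (Fgraph n a).Adj w w' := by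
    intro w w'
    constructor
    · intro hadj
      have hne : w ≠ w' := fun h => hadj.ne (congrArg F h)
      refine ⟨hne, ?_⟩
      rcases hedge _ _ hadj with ⟨k, h1, h2⟩ | h | h
      · left
        have e1 : τ ⟨w.val % a, Nat.mod_lt _ ha⟩ = k := clique_unique hdisj (hFmem w) h1
        have e2 : τ ⟨w'.val % a, Nat.mod_lt _ ha⟩ = k := clique_unique hdisj (hFmem w') h2
        exact congrArg Fin.val (τ.injective (e1.trans e2.symm))
      · have hw0 : w = ⟨0, hn0⟩ := hFinj (h.trans hx0F.symm)
        by_cases hc : (⟨w'.val % a, Nat.mod_lt _ ha⟩ : Fin a) = ⟨0, ha⟩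
        · left
          have hres : w'.val % a = 0 := congrArg Fin.val hc
          rw [hw0]
          show 0 % a = w'.val % a
          rw [Nat.zero_mod, hres]
        · right; left
          have hadj' : G.Adj x₀ (F w') := h ▸ hadj
          have hzz : F w' = z (τ ⟨w'.val % a, Nat.mod_lt _ ha⟩) :=
            hz2 (τ ⟨w'.val % a, Nat.mod_lt _ ha⟩) (hτne _ hc) _ ⟨hFmem w', hadj'⟩
          have hw' : w' = ⟨(⟨w'.val % a, Nat.mod_lt _ ha⟩ : Fin a).val,
              lt_of_lt_of_le (⟨w'.val % a, Nat.mod_lt _ ha⟩ : Fin a).2 han⟩ :=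
            hFinj (hzz.trans (hzF _ hc).symm)
          constructor
          · rw [hw0]
          · rw [hw']; exact Nat.mod_lt _ ha
      · have hw0 : w' = ⟨0, hn0⟩ := hFinj (h.trans hx0F.symm)
        by_cases hc : (⟨w.val % a, Nat.mod_lt _ ha⟩ : Fin a) = ⟨0, ha⟩
        · left
          have hres : w.val % a = 0 := congrArg Fin.val hc
          rw [hw0]
          show w.val % a = 0 % a
          rw [Nat.zero_mod, hres]
        · right; right
          have hadj' : G.Adj x₀ (F w) := h ▸ hadj.symm
          have hzz : F w = z (τ ⟨w.val % a, Nat.mod_lt _ ha⟩) :=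
            hz2 (τ ⟨w.val % a, Nat.mod_lt _ ha⟩) (hτne _ hc) _ ⟨hFmem w, hadj'⟩
          have hw' : w = ⟨(⟨w.val % a, Nat.mod_lt _ ha⟩ : Fin a).val,
              lt_of_lt_of_le (⟨w.val % a, Nat.mod_lt _ ha⟩ : Fin a).2 han⟩ :=
            hFinj (hzz.trans (hzF _ hc).symm)
          constructor
          · rw [hw0]
          · rw [hw']; exact Nat.mod_lt _ ha
    · rintro ⟨hne, h | h | h⟩
      · have hi : (⟨w.val % a, Nat.mod_lt _ ha⟩ : Fin a) = ⟨w'.val % a, Nat.mod_lt _ ha⟩ :=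
          Fin.ext h
        have h2 : F w' ∈ C (τ ⟨w.val % a, Nat.mod_lt _ ha⟩) := by rw [hi]; exact hFmem w'
        exact hclique _ (hFmem w) h2 (fun hh => hne (hFinj hh))
      · have hw0 : w = ⟨0, hn0⟩ := Fin.ext h.1
        have hia : w'.val < a := h.2
        have hi'0 : (⟨w'.val, hia⟩ : Fin a) ≠ ⟨0, ha⟩ := by
          intro hh
          apply hne
          rw [hw0]
          exact Fin.ext (show (0:ℕ) = w'.val from (congrArg Fin.val hh).symm)
        have hw'eq : w' = ⟨(⟨w'.val, hia⟩ : Fin a).val,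
            lt_of_lt_of_le (⟨w'.val, hia⟩ : Fin a).2 han⟩ := Fin.ext rfl
        rw [hw0, hw'eq, hx0F, hzF _ hi'0]
        exact (hz1 (τ ⟨w'.val, hia⟩) (hτne _ hi'0)).2
      · have hw0 : w' = ⟨0, hn0⟩ := Fin.ext h.1
        have hia : w.val < a := h.2
        have hi'0 : (⟨w.val, hia⟩ : Fin a) ≠ ⟨0, ha⟩ := by
          intro hh
          apply hne
          rw [hw0]
          exact Fin.ext (show w.val = 0 from congrArg Fin.val hh)
        have hw'eq : w = ⟨(⟨w.val, hia⟩ : Fin a).val,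
            lt_of_lt_of_le (⟨w.val, hia⟩ : Fin a).2 han⟩ := Fin.ext rfl
        rw [hw0, hw'eq, hx0F, hzF _ hi'0]
        exact (hz1 (τ ⟨w.val, hia⟩) (hτne _ hi'0)).2.symm
  let e0 := Equiv.ofBijective F ⟨hFinj, hFsurj⟩
  have hF0 : ∀ u : V, F (e0.symm u) = u := fun u => e0.apply_symm_apply u
  refine ⟨⟨e0.symm, ?_⟩⟩
  intro u v
  rw [← main (e0.symm u) (e0.symm v), hF0, hF0]


/-- **Lemma 2 (i), equality part.** Let `0 < α < n` with `n ≥ 2α`, and let `G` be a connected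
graph of order `n` and independence number `α` whose vertex set is the disjoint union of the
vertex sets of `α` cliques `C 0, …, C (α−1)`, such that every edge not lying inside one of
the cliques is incident with a fixed vertex `x₀ ∈ C 0`, and `x₀` has exactly one neighbor in
each of the cliques `C 1, …, C (α−1)`. Then `♯α(G) = f(n,α)` iff `G ≅ F(n,α)`. -/
theorem maxIndepSets_eq_f_iff_of_cliqueStructure {V : Type*} [Fintype V] (G : SimpleGraph V)
    (n a : ℕ) (ha0 : 0 < a) (han : a < n) (h2a : 2 * a ≤ n) (hconn : G.Connected)
    (hcard : Fintype.card V = n) (hα : indepNumber G = a)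
    (C : Fin a → Finset V)
    (hdisj : ∀ i j, i ≠ j → Disjoint (C i) (C j))
    (hcover : ∀ v : V, ∃ i, v ∈ C i)
    (hclique : ∀ i, G.IsClique (C i : Set V))
    (x₀ : V) (hx₀ : x₀ ∈ C ⟨0, ha0⟩)
    (hedge : ∀ u v : V, G.Adj u v → (∃ i, u ∈ C i ∧ v ∈ C i) ∨ u = x₀ ∨ v = x₀)
    (hone : ∀ i, i ≠ ⟨0, ha0⟩ → ∃! z, z ∈ C i ∧ G.Adj x₀ z) :
    numMaxIndep G = fFun n a ↔ Nonempty (G ≃g Fgraph n a) := by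
  classical
  have hsum : ∑ i, (C i).card = n := sum_card hdisj hcover hcard
  have h1 : ∀ i, 1 ≤ (C i).card := by
    obtain ⟨s, hs, hsc⟩ := exists_max_indep G
    rw [hα] at hsc
    intro i
    obtain ⟨v, hv⟩ := (exists_unique_rep hdisj hcover hclique hs hsc i).exists
    exact Finset.card_pos.2 ⟨v, hv.2⟩
  have hcount : numMaxIndep G = Hc ⟨0, ha0⟩ (fun i => (C i).card) :=
    count_total hdisj hcover hclique hx₀ hedge hone hα
  obtain ⟨hle, hiff⟩ := opt_le ha0 h2a ⟨0, ha0⟩ (fun i => (C i).card) h1 hsum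
  constructor
  · intro hEq
    have hg : GoodC n a ⟨0, ha0⟩ (fun i => (C i).card) :=
      hiff.1 (by rw [← hcount]; exact hEq)
    rcases hg with ⟨hg0, hgb⟩ | ⟨ha2, hr1, hc0⟩
    · obtain ⟨τ, hτ0, hτc⟩ := exists_tau ha0 h2a (fun i => (C i).card) hsum hg0 hgb
      exact build_iso ha0 h2a hcard hdisj hcover hclique hx₀ hedge hone hτ0 hτc
    · -- `a = 2` and `x₀` lies in the smaller clique: swap the two cliques.
      have hq2 : 2 ≤ n / a := (Nat.le_div_iff_mul_le ha0).2 h2a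
      have hn : a * (n / a) + n % a = n := Nat.div_add_mod n a
      have hE1 : (Finset.univ.erase (⟨0, ha0⟩ : Fin a)).card = 1 := by
        rw [Finset.card_erase_of_mem (Finset.mem_univ _), Finset.card_univ, Fintype.card_fin]
        omega
      obtain ⟨j, hj⟩ := Finset.card_eq_one.1 hE1
      have hjne : j ≠ ⟨0, ha0⟩ := by
        have : j ∈ Finset.univ.erase (⟨0, ha0⟩ : Fin a) := by
          rw [hj]; exact Finset.mem_singleton_self j
        exact (Finset.mem_erase.1 this).1
      have honly : ∀ i : Fin a, i ≠ ⟨0, ha0⟩ → i = j := by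
        intro i hi
        have : i ∈ Finset.univ.erase (⟨0, ha0⟩ : Fin a) :=
          Finset.mem_erase.2 ⟨hi, Finset.mem_univ i⟩
        rw [hj, Finset.mem_singleton] at this
        exact this
      obtain ⟨zj, ⟨hzjC, hzjAdj⟩, hzjuniq⟩ := hone j hjne
      have hsum2 : (C ⟨0, ha0⟩).card + (C j).card = n := by
        rw [← hsum, ← Finset.add_sum_erase _ _ (Finset.mem_univ (⟨0, ha0⟩ : Fin a)), hj,
          Finset.sum_singleton]
      set σ : Fin a ≃ Fin a := Equiv.swap ⟨0, ha0⟩ j with hσ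
      have hσ0 : σ ⟨0, ha0⟩ = j := Equiv.swap_apply_left _ _
      have hσj : σ j = ⟨0, ha0⟩ := Equiv.swap_apply_right _ _
      have hdisj' : ∀ i k, i ≠ k → Disjoint (C (σ i)) (C (σ k)) :=
        fun i k hik => hdisj _ _ (fun h => hik (σ.injective h))
      have hcover' : ∀ v : V, ∃ i, v ∈ C (σ i) := by
        intro v
        obtain ⟨i, hi⟩ := hcover v
        exact ⟨σ.symm i, by rw [Equiv.apply_symm_apply]; exact hi⟩
      have hclique' : ∀ i, G.IsClique ((C (σ i)) : Set V) := fun i => hclique (σ i)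
      have hx₀' : zj ∈ C (σ ⟨0, ha0⟩) := by rw [hσ0]; exact hzjC
      have hzjne : zj ≠ x₀ := by
        intro h
        exact hjne (clique_unique hdisj (h ▸ hzjC) hx₀)
      have hedge' : ∀ u v : V, G.Adj u v →
          (∃ i, u ∈ C (σ i) ∧ v ∈ C (σ i)) ∨ u = zj ∨ v = zj := by
        intro u v hadj
        rcases hedge u v hadj with ⟨k, h1', h2'⟩ | h | h
        · exact Or.inl ⟨σ.symm k, by rw [Equiv.apply_symm_apply]; exact h1',
            by rw [Equiv.apply_symm_apply]; exact h2'⟩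
        · subst h
          obtain ⟨k, hk⟩ := hcover v
          rcases eq_or_ne k ⟨0, ha0⟩ with rfl | hkne
          · exact Or.inl ⟨σ.symm ⟨0, ha0⟩, by rw [Equiv.apply_symm_apply]; exact hx₀,
              by rw [Equiv.apply_symm_apply]; exact hk⟩
          · have hkj := honly k hkne
            subst hkj
            exact Or.inr (Or.inr (hzjuniq v ⟨hk, hadj⟩))
        · subst h
          obtain ⟨k, hk⟩ := hcover u
          rcases eq_or_ne k ⟨0, ha0⟩ with rfl | hkne
          · exact Or.inl ⟨σ.symm ⟨0, ha0⟩, by rw [Equiv.apply_symm_apply]; exact hk,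
              by rw [Equiv.apply_symm_apply]; exact hx₀⟩
          · have hkj := honly k hkne
            subst hkj
            exact Or.inr (Or.inl (hzjuniq u ⟨hk, hadj.symm⟩))
      have hone' : ∀ i, i ≠ (⟨0, ha0⟩ : Fin a) → ∃! y, y ∈ C (σ i) ∧ G.Adj zj y := by
        intro i hi
        have hij := honly i hi
        subst hij
        rw [hσj]
        refine ⟨x₀, ⟨hx₀, hzjAdj.symm⟩, ?_⟩
        rintro y ⟨hyC, hyAdj⟩
        rcases hedge zj y hyAdj with ⟨k, h1', h2'⟩ | h | h
        · exfalso
          have e1 : k = i := clique_unique hdisj h1' hzjC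
          have e2 : k = ⟨0, ha0⟩ := clique_unique hdisj h2' hyC
          exact hi (e1 ▸ e2)
        · exact absurd h hzjne
        · exact h
      have h2q : a * (n / a) = 2 * (n / a) := by rw [ha2]
      have hg0' : (C (σ ⟨0, ha0⟩)).card = (n + a - 1) / a := by
        rw [hσ0, ceil_eq ha0 hn (Nat.mod_lt _ ha0) (by omega), if_neg (by omega)]
        have hc0' : (C ⟨0, ha0⟩).card = n / a := hc0
        omega
      have hgb' : ∀ i, i ≠ (⟨0, ha0⟩ : Fin a) →
          n / a ≤ (C (σ i)).card ∧ (C (σ i)).card ≤ n / a + 1 := by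
        intro i hi
        have hij := honly i hi
        subst hij
        rw [hσj]
        have hc0' : (C ⟨0, ha0⟩).card = n / a := hc0
        omega
      have hsum' : ∑ i, (C (σ i)).card = n := by
        rw [Equiv.sum_comp σ (fun i => (C i).card)]
        exact hsum
      obtain ⟨τ, hτ0, hτc⟩ := exists_tau ha0 h2a (fun i => (C (σ i)).card) hsum' hg0' hgb'
      exact build_iso ha0 h2a hcard hdisj' hcover' hclique' hx₀' hedge' hone' hτ0 hτc
  · rintro ⟨e⟩
    rw [numMaxIndep_congr e, Fgraph_count ha0 h2a]
end

section
/- Let n and α be positive integers with α < n < 2α, and let G be a connected graph of order n and independence number α having a vertex x_0 such that G − x_0 is isomorphic to G(n−1,α). Then x_0 belongs to no maximum independent set of G, and ♯α(G) = g(n−1,α). -/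
open Finset

/-!
Write `m = n - 1`. Since `α ≤ m < 2α`, the residue classes `r < m - α` of `G(m, α)` are edges
and the other `2α - m ≥ 2` classes are isolated vertices of `G - x₀`; as `G` is connected, each
of these is adjacent to `x₀`. An independent set through `x₀` thus meets only the `m - α`
two-vertex classes, each at most once, and has at most `m - α + 1 < α` vertices. So the maximum
independent sets of `G` are the `α`-vertex independent sets of `G - x₀ ≅ G(m, α)`, i.e. the
transversals of its `α` cliques, and there are `∏ |C_r| = g(m, α)` of them.
-/

open SimpleGraph

theorem Finset.exists_map_eq_of_subset_range {α β : Type*} (f : α ↪ β) {t : Finset β}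
    (h : ↑t ⊆ Set.range f) : ∃ s : Finset α, s.map f = t := by
  classical
  obtain ⟨s, -, hs⟩ := subset_set_image_iff.mp (Set.image_univ ▸ h)
  exact ⟨s, (map_eq_image f s).trans hs⟩

theorem Nat.lt_of_lt_mod_add {k a : ℕ} (h : k < k % a + a) : k < a := by
  by_contra! hak
  have := Nat.mod_le (k - a) a
  rw [← Nat.mod_eq_sub_mod hak] at this
  omega

theorem Nat.add_sub_one_div_eq_div_add_one {m a : ℕ} (ha : 0 < a) (h : 0 < m % a) :
    (m + a - 1) / a = m / a + 1 := by
  have hlt := Nat.mod_lt m ha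
  have hsplit : m + a - 1 = (m % a - 1 + a) + a * (m / a) := by
    have := Nat.mod_add_div m a
    omega
  rw [hsplit, Nat.add_mul_div_left _ _ ha, Nat.div_eq_of_lt_le (k := 1) (by omega) (by omega),
    add_comm]

theorem Fin.card_subtype_val_mod_eq {m a : ℕ} (r : Fin a) :
    Fintype.card {v : Fin m // v.val % a = r} = m / a + if (r : ℕ) < m % a then 1 else 0 := by
  have hr : (r : ℕ) % a = r := Nat.mod_eq_of_lt r.isLt
  have hcount := Nat.count_modEq_card m r.pos r
  rw [hr, Nat.count_eq_card_fintype] at hcount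
  rw [← hcount, Fintype.card_eq_nat_card, Fintype.card_eq_nat_card]
  exact Nat.card_congr
    { toFun := fun v => ⟨v.1, v.1.isLt, v.2.trans hr.symm⟩
      invFun := fun k => ⟨⟨k.1, k.2.1⟩, Eq.trans k.2.2 hr⟩
      left_inv := fun _ => rfl
      right_inv := fun _ => rfl }

theorem gFun_eq_prod {m a : ℕ} (ha : 0 < a) :
    gFun m a = ∏ r : Fin a, (m / a + if (r : ℕ) < m % a then 1 else 0) := by
  have hlarge : ∏ r ∈ range (m % a), (m / a + if r < m % a then 1 else 0) =
      (m / a + 1) ^ (m % a) := by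
    rw [prod_congr rfl fun r hr => by rw [if_pos (mem_range.mp hr)], prod_const, card_range]
  have hsmall : ∏ r ∈ Ico (m % a) a, (m / a + if r < m % a then 1 else 0) =
      (m / a) ^ (a - m % a) := by
    rw [prod_congr rfl fun r hr => by rw [if_neg (mem_Ico.mp hr).1.not_gt, add_zero],
      prod_const, Nat.card_Ico]
  rw [Fin.prod_univ_eq_prod_range (fun r => m / a + if r < m % a then 1 else 0),
    ← prod_range_mul_prod_Ico _ (Nat.mod_lt m ha).le, hlarge, hsmall, gFun, mul_comm]
  rcases (Nat.zero_le (m % a)).eq_or_lt with h | h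
  · rw [← h, pow_zero, pow_zero]
  · rw [Nat.add_sub_one_div_eq_div_add_one ha h]

namespace SimpleGraph

variable {V W : Type*} {G : SimpleGraph V} {H : SimpleGraph W}

theorem Embedding.isIndepFinset_map_iff (f : H ↪g G) {s : Finset W} :
    IsIndepFinset G (s.map f.toEmbedding) ↔ IsIndepFinset H s := by
  simp [IsIndepFinset]

theorem Embedding.ncard_isIndepFinset_subset_range (f : H ↪g G) (k : ℕ) :
    {t : Finset V | IsIndepFinset G t ∧ t.card = k ∧ ↑t ⊆ Set.range f}.ncard =
      {s : Finset W | IsIndepFinset H s ∧ s.card = k}.ncard := by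
  rw [← Set.ncard_image_of_injective {s : Finset W | IsIndepFinset H s ∧ s.card = k}
    (Finset.map_injective f.toEmbedding)]
  congr 1
  ext t
  constructor
  · rintro ⟨ht, rfl, hsub⟩
    obtain ⟨s, rfl⟩ := exists_map_eq_of_subset_range f.toEmbedding hsub
    exact ⟨s, ⟨f.isIndepFinset_map_iff.mp ht, (card_map _).symm⟩, rfl⟩
  · rintro ⟨s, ⟨hs, rfl⟩, rfl⟩
    exact ⟨f.isIndepFinset_map_iff.mpr hs, card_map _, coe_map_subset_range _ _⟩

theorem Connected.adj_of_isIsolated (hG : G.Connected) (f : H ↪g G) {x₀ : V}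
    (hf : Set.range f = {x₀}ᶜ) {w : W} (hw : H.IsIsolated w) : G.Adj (f w) x₀ := by
  have hne : f w ∈ ({x₀}ᶜ : Set V) := hf ▸ Set.mem_range_self w
  have : Nontrivial V := ⟨⟨_, _, hne⟩⟩
  obtain ⟨v, hv⟩ := hG.preconnected.exists_adj_of_nontrivial (f w)
  by_cases hvx : v = x₀
  · exact hvx ▸ hv
  · obtain ⟨u, rfl⟩ : v ∈ Set.range f := hf ▸ hvx
    exact absurd (f.map_adj_iff.mp hv) (hw u)

end SimpleGraph

namespace Ggraph

variable {m a : ℕ}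

theorem isIsolated_of_le_mod_add {w : Fin m} (hw : m ≤ w.val % a + a) :
    (Ggraph m a).IsIsolated w := by
  rintro u ⟨hne, hmod⟩
  have hwa : w.val < a := Nat.lt_of_lt_mod_add (by omega)
  have hua : u.val < a := Nat.lt_of_lt_mod_add (by omega)
  rw [Nat.mod_eq_of_lt hwa, Nat.mod_eq_of_lt hua] at hmod
  exact hne (Fin.ext hmod)

theorem injOn_mod_of_isIndepFinset {t : Finset (Fin m)} (ht : IsIndepFinset (Ggraph m a) t) :
    Set.InjOn (fun v : Fin m => v.val % a) t :=
  fun _ hv _ hw hvw => by_contra fun hne => ht hv hw hne ⟨hne, hvw⟩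

def transversal (g : ∀ r : Fin a, {v : Fin m // v.val % a = r}) : Finset (Fin m) :=
  univ.image fun r => (g r).val

theorem card_transversal (g : ∀ r : Fin a, {v : Fin m // v.val % a = r}) :
    (transversal g).card = a := by
  have hinj : Function.Injective fun r => (g r).val := fun r r' h =>
    Fin.ext ((g r).2.symm.trans ((congrArg (·.val % a) h).trans (g r').2))
  rw [transversal, card_image_of_injective _ hinj, card_univ, Fintype.card_fin]

theorem isIndepFinset_transversal (g : ∀ r : Fin a, {v : Fin m // v.val % a = r}) :
    IsIndepFinset (Ggraph m a) (transversal g) := by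
  rintro _ hu _ hv hne ⟨-, hmod⟩
  obtain ⟨r, -, rfl⟩ := mem_image.mp hu
  obtain ⟨r', -, rfl⟩ := mem_image.mp hv
  exact hne (by rw [Fin.ext ((g r).2.symm.trans (hmod.trans (g r').2))])

theorem transversal_injective : Function.Injective (transversal (m := m) (a := a)) := by
  intro g g' h
  funext r
  have hr : (g r).val ∈ transversal g' := h ▸ mem_image_of_mem _ (mem_univ r)
  obtain ⟨r', -, hr'⟩ := mem_image.mp hr
  obtain rfl : r' = r := Fin.ext ((g' r').2.symm.trans (hr' ▸ (g r).2))
  exact Subtype.ext hr'.symm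

theorem range_transversal (ha : 0 < a) :
    Set.range (transversal (m := m) (a := a)) =
      {t | IsIndepFinset (Ggraph m a) t ∧ t.card = a} := by
  ext t
  refine ⟨by rintro ⟨g, rfl⟩; exact ⟨isIndepFinset_transversal g, card_transversal g⟩, ?_⟩
  rintro ⟨ht, hcard⟩
  have himage : t.image (fun v : Fin m => v.val % a) = range a :=
    eq_of_subset_of_card_le (fun r hr => by
        obtain ⟨v, -, rfl⟩ := mem_image.mp hr
        exact mem_range.mpr (Nat.mod_lt _ ha))
      (by rw [card_image_of_injOn (injOn_mod_of_isIndepFinset ht), hcard, card_range])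
  have hsurj (r : Fin a) : ∃ v ∈ t, v.val % a = r :=
    mem_image.mp (himage ▸ mem_range.mpr r.isLt)
  choose g hgt hg using hsurj
  refine ⟨fun r => ⟨g r, hg r⟩, eq_of_subset_of_card_le ?_ (by rw [hcard, card_transversal])⟩
  intro v hv
  obtain ⟨r, -, rfl⟩ := mem_image.mp hv
  exact hgt r

theorem ncard_isIndepFinset_card_eq (ha : 0 < a) :
    {t | IsIndepFinset (Ggraph m a) t ∧ t.card = a}.ncard = gFun m a := by
  rw [← range_transversal ha, Set.ncard_range_of_injective transversal_injective,
    Nat.card_eq_fintype_card, Fintype.card_pi, gFun_eq_prod ha]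
  simp only [Fin.card_subtype_val_mod_eq]

theorem card_le_of_isIndepFinset_of_mem {V : Type*} {G : SimpleGraph V} (hG : G.Connected)
    (f : Ggraph m a ↪g G) {x₀ : V} (hf : Set.range f = {x₀}ᶜ) {s : Finset V}
    (hs : IsIndepFinset G s) (hx : x₀ ∈ s) : s.card ≤ m - a + 1 := by
  classical
  obtain ⟨t, ht⟩ := exists_map_eq_of_subset_range f.toEmbedding (t := s.erase x₀) (by
    rw [RelEmbedding.coe_toEmbedding, hf]
    exact fun v hv => ne_of_mem_erase hv)
  have hti : IsIndepFinset (Ggraph m a) t := f.isIndepFinset_map_iff.mp (ht ▸ fun u hu v hv =>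
    hs (mem_of_mem_erase hu) (mem_of_mem_erase hv))
  have hclasses : t.image (fun w => w.val % a) ⊆ range (m - a) := by
    intro r hr
    obtain ⟨w, hw, rfl⟩ := mem_image.mp hr
    refine mem_range.mpr (by_contra fun hle => ?_)
    have hfw : f w ∈ s.erase x₀ := ht ▸ mem_map_of_mem f.toEmbedding hw
    exact hs (mem_of_mem_erase hfw) hx (ne_of_mem_erase hfw)
      (hG.adj_of_isIsolated f hf (isIsolated_of_le_mod_add (by omega)))
  calc s.card = t.card + 1 := by rw [← card_erase_add_one hx, ← ht, card_map]
    _ = (t.image fun w => w.val % a).card + 1 := by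
      rw [card_image_of_injOn (injOn_mod_of_isIndepFinset hti)]
    _ ≤ m - a + 1 := by simpa using card_le_card hclasses

end Ggraph

theorem special_vertex_in_no_maxIndepSet_general {V : Type*} [Fintype V] (G : SimpleGraph V)
    (n a : ℕ) (han : a < n) (hn2a : n < 2 * a) (hconn : G.Connected)
    (hα : indepNumber G = a) (x₀ : V)
    (hiso : Nonempty ((G.induce ({x₀}ᶜ : Set V)) ≃g Ggraph (n - 1) a)) :
    (∀ s : Finset V, IsIndepFinset G s → s.card = indepNumber G → x₀ ∉ s) ∧
      numMaxIndep G = gFun (n - 1) a := by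
  obtain ⟨e⟩ := hiso
  let f : Ggraph (n - 1) a ↪g G := (Embedding.induce _).comp e.symm.toEmbedding
  have hf : Set.range f = {x₀}ᶜ := by
    rw [RelEmbedding.coe_trans, Set.range_comp,
      show Set.range e.symm.toEmbedding = Set.univ from e.symm.surjective.range_eq, Set.image_univ]
    exact Subtype.range_coe
  have hx₀ : ∀ s : Finset V, IsIndepFinset G s → s.card = a → x₀ ∉ s := fun s hs hcard hx =>
    (Ggraph.card_le_of_isIndepFinset_of_mem hconn f hf hs hx).not_gt (by omega)
  refine ⟨fun s hs hcard => hx₀ s hs (hcard.trans hα), ?_⟩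
  have hmax : {s | IsIndepFinset G s ∧ s.card = a} =
      {s | IsIndepFinset G s ∧ s.card = a ∧ ↑s ⊆ Set.range f} := by
    ext s
    simp only [Set.mem_ofPred_eq, hf, Set.subset_compl_singleton_iff, mem_coe]
    exact ⟨fun h => ⟨h.1, h.2, hx₀ s h.1 h.2⟩, fun h => ⟨h.1, h.2.1⟩⟩
  rw [numMaxIndep, hα, hmax, f.ncard_isIndepFinset_subset_range,
    Ggraph.ncard_isIndepFinset_card_eq (by omega)]

/-- Let `α < n < 2α`, and let `G` be a connected graph of order `n` and independence number
`α` with a vertex `x₀` such that `G − x₀ ≅ G(n−1,α)`. Then `x₀` belongs to no maximum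
independent set of `G`, and `♯α(G) = g(n−1,α)`. -/
theorem special_vertex_in_no_maxIndepSet {V : Type*} [Fintype V] (G : SimpleGraph V)
    (n a : ℕ) (ha0 : 0 < a) (han : a < n) (hn2a : n < 2 * a) (hconn : G.Connected)
    (hcard : Fintype.card V = n) (hα : indepNumber G = a) (x₀ : V)
    (hiso : Nonempty ((G.induce ({x₀}ᶜ : Set V)) ≃g Ggraph (n - 1) a)) :
    (∀ s : Finset V, IsIndepFinset G s → s.card = indepNumber G → x₀ ∉ s) ∧
      numMaxIndep G = gFun (n - 1) a :=
  special_vertex_in_no_maxIndepSet_general G n a han hn2a hconn hα x₀ hiso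
end
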